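/- arXiv:1212.1631 — 8 statements merged into one kernel-verified Lean document; each statement's English description precedes it below -/
import Mathlib

section
/- Let A be a P₀-algebra with a descending filtration A = F⁰A ⊇ F¹A ⊇ F²A ⊇ ⋯ by ideals such that FᵖA·FᵠA ⊆ F^{p+q}A, where FᵖA is the ideal generated by homogeneous elements of degree ≥ p. Suppose the bracket satisfies: for homogeneous elements a of degree d and b of degree ≥ p, [a,b] has degree d + (deg b) + 1. Then for all p ≥ 0: (i) if d ≥ -1 then [A^d, FᵖA] ⊆ FᵖA; (ii) if d < -1 and p + d ≥ 0 then [A^d, FᵖA] ⊆ F^{p+d+1}A. -/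
/-- A `P₀`-algebra over a field `k`: a ℤ-graded (graded-commutative) algebra with a
Poisson bracket of degree `1` satisfying graded antisymmetry, Leibniz rule and
graded Jacobi identity. -/
structure P0Data (k A : Type*) [Field k] [Ring A] [Algebra k A] where
  grade : ℤ → Submodule k A
  internal : DirectSum.IsInternal grade
  one_mem : (1 : A) ∈ grade 0
  mul_mem : ∀ {r s : ℤ} {a b : A}, a ∈ grade r → b ∈ grade s → a * b ∈ grade (r + s)
  gcomm : ∀ {r s : ℤ} {a b : A}, a ∈ grade r → b ∈ grade s →
    a * b = ((-1 : k) ^ (r * s)) • (b * a)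
  bracket : A →ₗ[k] A →ₗ[k] A
  bracket_mem : ∀ {r s : ℤ} {a b : A}, a ∈ grade r → b ∈ grade s →
    bracket a b ∈ grade (r + s + 1)
  antisymm : ∀ {r s : ℤ} {a b : A}, a ∈ grade r → b ∈ grade s →
    bracket a b = -(((-1 : k) ^ ((r - 1) * (s - 1))) • bracket b a)
  leibniz : ∀ {r s : ℤ} {a b : A} (c : A), a ∈ grade r → b ∈ grade s →
    bracket (a * b) c = a * bracket b c + ((-1 : k) ^ (r * s)) • (b * bracket a c)
  jacobi : ∀ {r s t : ℤ} {a b c : A}, a ∈ grade r → b ∈ grade s → c ∈ grade t →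
    ((-1 : k) ^ ((r - 1) * (t - 1))) • bracket (bracket a b) c +
      ((-1 : k) ^ ((s - 1) * (r - 1))) • bracket (bracket b c) a +
      ((-1 : k) ^ ((t - 1) * (s - 1))) • bracket (bracket c a) b = 0

/-- The ideal `FᵖA` generated by homogeneous elements of degree at least `p`. -/
def P0Data.filt {k A : Type*} [Field k] [Ring A] [Algebra k A] (P : P0Data k A) (p : ℤ) :
    Submodule k A :=
  Submodule.span k {x | ∃ (a b : A) (q : ℤ), p ≤ q ∧ b ∈ P.grade q ∧ x = a * b}

/-- The powers `I⁽ʲ⁾` of the ideal `I = F¹A` generated by elements of positive degree: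
`I⁽⁰⁾ = A`, `I⁽ʲ⁺¹⁾ = I · I⁽ʲ⁾`. -/
def P0Data.ipow {k A : Type*} [Field k] [Ring A] [Algebra k A] (P : P0Data k A) :
    ℕ → Submodule k A
  | 0 => ⊤
  | j + 1 => Submodule.span k {x | ∃ a ∈ P.filt 1, ∃ b ∈ P.ipow j, x = a * b}

namespace P0Data

variable {k A : Type*} [Field k] [Ring A] [Algebra k A] (P : P0Data k A)

lemma mul_mem_filt {p q : ℤ} (hpq : p ≤ q) (a : A) {b : A} (hb : b ∈ P.grade q) :
    a * b ∈ P.filt p :=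
  Submodule.subset_span ⟨a, b, q, hpq, hb, rfl⟩

lemma map_mem_of_forall_homogeneous {M : Type*} [AddCommGroup M] [Module k M]
    (f : A →ₗ[k] M) {S : Submodule k M} (h : ∀ r, ∀ c ∈ P.grade r, f c ∈ S) (c : A) :
    f c ∈ S := by
  have hle : ⨆ r, P.grade r ≤ S.comap f := iSup_le fun r c hc => h r c hc
  rw [P.internal.submodule_iSup_eq_top] at hle
  exact hle Submodule.mem_top

variable {P}

/-- By antisymmetry and the Leibniz rule, `[a, c e] = ±(c [e, a] ± [c, a] e)`, and both terms
are multiples of a homogeneous element of degree at least `min (deg e) (deg e + deg a + 1)`. -/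
lemma bracket_homogeneous_mul_mem_filt {t d r q : ℤ} (htq : t ≤ q) (htqd : t ≤ q + d + 1)
    {a c e : A} (ha : a ∈ P.grade d) (hc : c ∈ P.grade r) (he : e ∈ P.grade q) :
    P.bracket a (c * e) ∈ P.filt t := by
  rw [P.antisymm ha (P.mul_mem hc he), P.leibniz a hc he, P.gcomm he (P.bracket_mem hc ha)]
  refine Submodule.neg_mem _ (Submodule.smul_mem _ _ (Submodule.add_mem _ ?_ ?_))
  · exact P.mul_mem_filt htqd c (P.bracket_mem he ha)
  · exact Submodule.smul_mem _ _ (Submodule.smul_mem _ _ (P.mul_mem_filt htq _ he))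

lemma bracket_mem_filt {p t d : ℤ} (htp : t ≤ p) (htpd : t ≤ p + d + 1) {a : A}
    (ha : a ∈ P.grade d) {b : A} (hb : b ∈ P.filt p) : P.bracket a b ∈ P.filt t := by
  suffices P.filt p ≤ (P.filt t).comap (P.bracket a) from this hb
  refine Submodule.span_le.mpr ?_
  rintro _ ⟨c, e, q, hpq, he, rfl⟩
  exact P.map_mem_of_forall_homogeneous ((P.bracket a).comp (LinearMap.mulRight k e))
    (fun r c hc => bracket_homogeneous_mul_mem_filt (by omega) (by omega) ha hc he) c

end P0Data

theorem bracket_filtration_compat_general {k A : Type*} [Field k]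
    [Ring A] [Algebra k A] (P : P0Data k A) :
    ∀ p : ℤ, 0 ≤ p →
      (∀ d : ℤ, -1 ≤ d → ∀ a ∈ P.grade d, ∀ b ∈ P.filt p,
        P.bracket a b ∈ P.filt p) ∧
      (∀ d : ℤ, d < -1 → 0 ≤ p + d → ∀ a ∈ P.grade d, ∀ b ∈ P.filt p,
        P.bracket a b ∈ P.filt (p + d + 1)) :=
  fun p _ =>
    ⟨fun _ hd _ ha _ hb => P0Data.bracket_mem_filt le_rfl (by omega) ha hb,
     fun _ hd _ _ ha _ hb => P0Data.bracket_mem_filt (by omega) le_rfl ha hb⟩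

/-- Lemma l-Maud. For `p ≥ 0`:
(i) if `d ≥ -1` then `[A^d, FᵖA] ⊆ FᵖA`;
(ii) if `d < -1` and `p + d ≥ 0` then `[A^d, FᵖA] ⊆ F^{p+d+1}A`. -/
theorem bracket_filtration_compat {k A : Type*} [Field k] [CharZero k]
    [Ring A] [Algebra k A] (P : P0Data k A)
    (hmul : ∀ (p q : ℤ) (x y : A), x ∈ P.filt p → y ∈ P.filt q → x * y ∈ P.filt (p + q)) :
    ∀ p : ℤ, 0 ≤ p →
      (∀ d : ℤ, -1 ≤ d → ∀ a ∈ P.grade d, ∀ b ∈ P.filt p,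
        P.bracket a b ∈ P.filt p) ∧
      (∀ d : ℤ, d < -1 → 0 ≤ p + d → ∀ a ∈ P.grade d, ∀ b ∈ P.filt p,
        P.bracket a b ∈ P.filt (p + d + 1)) :=
  bracket_filtration_compat_general P
end

section
/- Let A be a P₀-algebra, I the ideal generated by elements of positive degree, and g = I⁽²⁾ ∩ A^{-1} the degree -1 part of the square of I. Then for all j ≥ 0, [g, I⁽ʲ⁾] ⊆ I⁽ʲ⁺¹⁾. In particular, g is a Lie subalgebra (under the Poisson bracket) whose adjoint action on A/FᵖA is nilpotent for every p, where FᵖA is the ideal generated by elements of degree ≥ p. -/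
/-!
`I⁽ʲ⁺¹⁾` is spanned by products `u * c` with `u` homogeneous of positive degree and `c ∈ I⁽ʲ⁾`
homogeneous. By antisymmetry and the Leibniz rule, bracketing with a homogeneous element is a
graded derivation up to signs, so it suffices to look at such generators. Bracketing with a
homogeneous `v` of degree `≥ -1` preserves every `I⁽ʲ⁾`, because `[v, u]` again has positive
degree. For homogeneous `g ∈ I⁽²⁾`, induction on `j` then gives
`[g, u c] = ± u [g, c] ± [g, u] c ∈ I · I⁽ʲ⁺¹⁾ + I⁽²⁾ · I⁽ʲ⁾`, since `[g, u] = ± [u, g] ∈ I⁽²⁾`;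
the case `j = 0` is `[I⁽²⁾, A] ⊆ I`, directly from the Leibniz rule. Nilpotency modulo `FᵖA`
follows since `I⁽ʲ⁾ ⊆ FʲA`.
-/

namespace P0Data

variable {k A : Type*} [Field k] [Ring A] [Algebra k A] (P : P0Data k A)

theorem mem_of_forall_grade_le {S : Submodule k A} (h : ∀ r, P.grade r ≤ S) (x : A) : x ∈ S :=
  iSup_le h (P.internal.submodule_iSup_eq_top ▸ Submodule.mem_top)

theorem mul_mem_filt_of_mem_grade (a : A) {p q : ℤ} {b : A} (hb : b ∈ P.grade q) (hpq : p ≤ q) :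
    a * b ∈ P.filt p :=
  Submodule.subset_span ⟨a, b, q, hpq, hb, rfl⟩

theorem mem_filt_of_mem_grade {p q : ℤ} {b : A} (hb : b ∈ P.grade q) (hpq : p ≤ q) :
    b ∈ P.filt p := by
  simpa using P.mul_mem_filt_of_mem_grade 1 hb hpq

theorem filt_antitone : Antitone P.filt := fun _ _ hpq =>
  Submodule.span_le.mpr fun _ ⟨a, _, _, hq, hb, hx⟩ =>
    hx ▸ P.mul_mem_filt_of_mem_grade a hb (hpq.trans hq)

theorem mul_mem_filt_s3 (c : A) {p : ℤ} {x : A} (hx : x ∈ P.filt p) : c * x ∈ P.filt p := by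
  refine (Submodule.span_le (p := (P.filt p).comap (LinearMap.mulLeft k c))).mpr ?_ hx
  rintro _ ⟨a, b, q, hq, hb, rfl⟩
  simpa [← mul_assoc] using P.mul_mem_filt_of_mem_grade (c * a) hb hq

theorem filt_le_of_forall {S : Submodule k A} {p : ℤ}
    (h : ∀ {r q : ℤ} {a b : A}, a ∈ P.grade r → b ∈ P.grade q → p ≤ q → a * b ∈ S) :
    P.filt p ≤ S := by
  refine Submodule.span_le.mpr ?_
  rintro _ ⟨a, b, q, hq, hb, rfl⟩
  exact P.mem_of_forall_grade_le (S := S.comap (LinearMap.mulRight k b))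
    (fun r a ha => h ha hb hq) a

theorem mul_mem_filt_add {q p : ℤ} {u x : A} (hu : u ∈ P.grade q) (hx : x ∈ P.filt p) :
    u * x ∈ P.filt (p + q) := by
  refine P.filt_le_of_forall (S := (P.filt (p + q)).comap (LinearMap.mulLeft k u))
    (fun {r q'} {a b} ha hb hq' => ?_) hx
  rw [Submodule.mem_comap, LinearMap.mulLeft_apply, ← mul_assoc, P.gcomm hu ha, smul_mul_assoc,
    mul_assoc]
  exact Submodule.smul_mem _ _ (P.mul_mem_filt_of_mem_grade a (P.mul_mem hu hb) (by omega))

theorem mul_mem_ipow_succ {a b : A} {j : ℕ} (ha : a ∈ P.filt 1) (hb : b ∈ P.ipow j) :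
    a * b ∈ P.ipow (j + 1) :=
  Submodule.subset_span ⟨a, ha, b, hb, rfl⟩

theorem mul_mem_ipow (c : A) {j : ℕ} {x : A} (hx : x ∈ P.ipow j) : c * x ∈ P.ipow j := by
  cases j with
  | zero => trivial
  | succ j =>
    refine (Submodule.span_le (p := (P.ipow (j + 1)).comap (LinearMap.mulLeft k c))).mpr ?_ hx
    rintro _ ⟨a, ha, b, hb, rfl⟩
    simpa [← mul_assoc] using P.mul_mem_ipow_succ (P.mul_mem_filt_s3 c ha) hb

theorem ipow_succ_le (j : ℕ) : P.ipow (j + 1) ≤ P.ipow j :=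
  Submodule.span_le.mpr fun _ ⟨a, _, _, hb, hx⟩ => hx ▸ P.mul_mem_ipow a hb

theorem mul_mem_ipow_add {i j : ℕ} {x y : A} (hx : x ∈ P.ipow i) (hy : y ∈ P.ipow j) :
    x * y ∈ P.ipow (i + j) := by
  induction i generalizing x with
  | zero => simpa using P.mul_mem_ipow x hy
  | succ i ih =>
    refine (Submodule.span_le (p := (P.ipow (i + 1 + j)).comap (LinearMap.mulRight k y))).mpr ?_ hx
    rintro _ ⟨a, ha, b, hb, rfl⟩
    rw [SetLike.mem_coe, Submodule.mem_comap, LinearMap.mulRight_apply, mul_assoc,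
      Nat.add_right_comm]
    exact P.mul_mem_ipow_succ ha (ih hb)

theorem ipow_le_of_forall_homogeneous {S : Submodule k A} {j : ℕ}
    (h : ∀ {r : ℤ} {x : A}, x ∈ P.grade r → x ∈ P.ipow j → x ∈ S) : P.ipow j ≤ S := by
  induction j generalizing S with
  | zero => exact fun x _ => P.mem_of_forall_grade_le (fun r y hy => h hy trivial) x
  | succ j ih =>
    refine Submodule.span_le.mpr ?_
    rintro _ ⟨a, ha, b, hb, rfl⟩
    refine P.filt_le_of_forall (S := S.comap (LinearMap.mulRight k b))
      (fun {r q} {a' v} ha' hv hq => ?_) ha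
    refine ih (S := S.comap (LinearMap.mulLeft k (a' * v))) (fun hc hcj => ?_) hb
    exact h (P.mul_mem (P.mul_mem ha' hv) hc)
      (P.mul_mem_ipow_succ (P.mul_mem_filt_s3 a' (P.mem_filt_of_mem_grade hv hq)) hcj)

theorem ipow_succ_le_of_forall {S : Submodule k A} {j : ℕ}
    (h : ∀ {q t : ℤ} {u c : A}, u ∈ P.grade q → 1 ≤ q → c ∈ P.grade t → c ∈ P.ipow j →
      u * c ∈ S) :
    P.ipow (j + 1) ≤ S := by
  refine Submodule.span_le.mpr ?_
  rintro _ ⟨a, ha, b, hb, rfl⟩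
  refine P.filt_le_of_forall (S := S.comap (LinearMap.mulRight k b))
    (fun {r q} {a' v} ha' hv hq => ?_) ha
  refine P.ipow_le_of_forall_homogeneous (S := S.comap (LinearMap.mulLeft k (a' * v)))
    (fun hc hcj => ?_) hb
  rw [Submodule.mem_comap, LinearMap.mulLeft_apply, P.gcomm ha' hv, smul_mul_assoc, mul_assoc]
  exact Submodule.smul_mem _ _ (h hv hq (P.mul_mem ha' hc) (P.mul_mem_ipow a' hcj))

theorem ipow_le_filt (j : ℕ) : P.ipow j ≤ P.filt j := by
  induction j with
  | zero => exact fun x _ => by simpa using P.mul_mem_filt_of_mem_grade x P.one_mem le_rfl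
  | succ j ih =>
    exact P.ipow_succ_le_of_forall fun hu hq _ hcj =>
      P.filt_antitone (by push_cast; omega) (P.mul_mem_filt_add hu (ih hcj))

theorem exists_bracket_mul_eq {r s t : ℤ} {v u c : A} (hv : v ∈ P.grade r) (hu : u ∈ P.grade s)
    (hc : c ∈ P.grade t) : ∃ ε₁ ε₂ : k,
      P.bracket v (u * c) = ε₁ • (u * P.bracket v c) + ε₂ • (P.bracket v u * c) := by
  refine ⟨(-1) ^ ((r - 1) * (s + t - 1)) * (-1) ^ ((t - 1) * (r - 1)),
    (-1) ^ ((r - 1) * (s + t - 1)) * (-1) ^ (s * t) * (-1) ^ ((s - 1) * (r - 1)) *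
      (-1) ^ (t * (r + s + 1)), ?_⟩
  rw [P.antisymm hv (P.mul_mem hu hc), P.leibniz v hu hc, P.antisymm hc hv, P.antisymm hu hv]
  simp only [mul_neg, mul_smul_comm]
  rw [P.gcomm hc (P.bracket_mem hv hu)]
  module

theorem bracket_mem_ipow_of_mem_grade {r : ℤ} {v : A} (hv : v ∈ P.grade r) (hr : -1 ≤ r)
    {j : ℕ} {x : A} (hx : x ∈ P.ipow j) : P.bracket v x ∈ P.ipow j := by
  induction j generalizing x with
  | zero => trivial
  | succ j ih =>
    refine P.ipow_succ_le_of_forall (S := (P.ipow (j + 1)).comap (P.bracket v))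
      (fun hu hq hc hcj => ?_) hx
    obtain ⟨ε₁, ε₂, h⟩ := P.exists_bracket_mul_eq hv hu hc
    rw [Submodule.mem_comap, h]
    exact add_mem
      (Submodule.smul_mem _ _ (P.mul_mem_ipow_succ (P.mem_filt_of_mem_grade hu hq) (ih hcj)))
      (Submodule.smul_mem _ _
        (P.mul_mem_ipow_succ (P.mem_filt_of_mem_grade (P.bracket_mem hv hu) (by omega)) hcj))

theorem bracket_mem_ipow_of_mem_ipow_succ {j : ℕ} {x : A} (hx : x ∈ P.ipow (j + 1)) (y : A) :
    P.bracket x y ∈ P.ipow j := by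
  induction j generalizing x with
  | zero => trivial
  | succ j ih =>
    refine P.ipow_succ_le_of_forall (S := (P.ipow (j + 1)).comap (P.bracket.flip y))
      (fun hu hq hc hcj => ?_) hx
    rw [Submodule.mem_comap, LinearMap.flip_apply, P.leibniz y hu hc]
    exact add_mem (P.mul_mem_ipow_succ (P.mem_filt_of_mem_grade hu hq) (ih hcj))
      (Submodule.smul_mem _ _ (P.mul_mem_ipow_add (j := 0) hcj trivial))

theorem bracket_mem_ipow_succ {r : ℤ} {g : A} (hg : g ∈ P.grade r) (hg2 : g ∈ P.ipow 2)
    {j : ℕ} {x : A} (hx : x ∈ P.ipow j) : P.bracket g x ∈ P.ipow (j + 1) := by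
  induction j generalizing x with
  | zero => exact P.bracket_mem_ipow_of_mem_ipow_succ hg2 x
  | succ j ih =>
    refine P.ipow_succ_le_of_forall (S := (P.ipow (j + 1 + 1)).comap (P.bracket g))
      (fun {q t u c} hu hq hc hcj => ?_) hx
    obtain ⟨ε₁, ε₂, h⟩ := P.exists_bracket_mul_eq hg hu hc
    have hgu : P.bracket g u ∈ P.ipow 2 := by
      rw [P.antisymm hg hu]
      exact neg_mem (Submodule.smul_mem _ _
        (P.bracket_mem_ipow_of_mem_grade hu (by omega) hg2))
    rw [Submodule.mem_comap, h]
    exact add_mem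
      (Submodule.smul_mem _ _ (P.mul_mem_ipow_succ (P.mem_filt_of_mem_grade hu hq) (ih hcj)))
      (Submodule.smul_mem _ _ (add_comm 2 j ▸ P.mul_mem_ipow_add hgu hcj))

theorem foldr_bracket_mem_ipow {l : List A}
    (hl : ∀ a ∈ l, a ∈ P.ipow 2 ∧ SetLike.IsHomogeneousElem P.grade a) (x : A) :
    l.foldr (fun a y => P.bracket a y) x ∈ P.ipow l.length := by
  induction l with
  | nil => trivial
  | cons a l ih =>
    obtain ⟨ha2, r, ha⟩ := hl a List.mem_cons_self
    exact P.bracket_mem_ipow_succ ha ha2 (ih fun b hb => hl b (List.mem_cons_of_mem a hb))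

end P0Data

theorem gauge_lie_algebra_pronilpotent_general {k A : Type*} [Field k]
    [Ring A] [Algebra k A] (P : P0Data k A) :
    (∀ j : ℕ, ∀ a : A, a ∈ P.ipow 2 → a ∈ P.grade (-1) →
      ∀ x ∈ P.ipow j, P.bracket a x ∈ P.ipow (j + 1)) ∧
    (∀ a b : A, a ∈ P.ipow 2 → a ∈ P.grade (-1) → b ∈ P.ipow 2 → b ∈ P.grade (-1) →
      P.bracket a b ∈ P.ipow 2 ⊓ P.grade (-1)) ∧
    (∀ (p : ℕ) (l : List A), (∀ a ∈ l, a ∈ P.ipow 2 ∧ a ∈ P.grade (-1)) →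
      p ≤ l.length → ∀ x : A,
        l.foldr (fun a y => P.bracket a y) x ∈ P.filt (p : ℤ)) := by
  refine ⟨fun j a ha2 ha x hx => P.bracket_mem_ipow_succ ha ha2 hx,
    fun a b ha2 ha hb2 hb => ⟨P.ipow_succ_le 2 (P.bracket_mem_ipow_succ ha ha2 hb2), ?_⟩,
    fun p l hl hp x => ?_⟩
  · simpa using P.bracket_mem ha hb
  · have hl' : ∀ a ∈ l, a ∈ P.ipow 2 ∧ SetLike.IsHomogeneousElem P.grade a :=
      fun a ha => ⟨(hl a ha).1, -1, (hl a ha).2⟩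
    exact P.filt_antitone (by exact_mod_cast hp)
      (P.ipow_le_filt _ (P.foldr_bracket_mem_ipow hl' x))

/-- Let `g = I⁽²⁾ ∩ A^{-1}`. Then `[g, I⁽ʲ⁾] ⊆ I⁽ʲ⁺¹⁾` for all `j ≥ 0`;
in particular `g` is a Lie subalgebra under the Poisson bracket, and its iterated adjoint
action is nilpotent modulo each `FᵖA`. -/
theorem gauge_lie_algebra_pronilpotent {k A : Type*} [Field k] [CharZero k]
    [Ring A] [Algebra k A] (P : P0Data k A) :
    (∀ j : ℕ, ∀ a : A, a ∈ P.ipow 2 → a ∈ P.grade (-1) →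
      ∀ x ∈ P.ipow j, P.bracket a x ∈ P.ipow (j + 1)) ∧
    (∀ a b : A, a ∈ P.ipow 2 → a ∈ P.grade (-1) → b ∈ P.ipow 2 → b ∈ P.grade (-1) →
      P.bracket a b ∈ P.ipow 2 ⊓ P.grade (-1)) ∧
    (∀ (p : ℕ) (l : List A), (∀ a ∈ l, a ∈ P.ipow 2 ∧ a ∈ P.grade (-1)) →
      p ≤ l.length → ∀ x : A,
        l.foldr (fun a y => P.bracket a y) x ∈ P.filt (p : ℤ)) :=
  gauge_lie_algebra_pronilpotent_general P
end

section
/- Let A be a filtered P₀-algebra with filtration FᵖA by ideals generated by elements of degree ≥ p. Then for all p ≥ 0: (i) [FᵖA⁰, A⁰] ⊆ FᵖA¹; (ii) [FᵖA⁰, FᵖA⁰] ⊆ F^{p+1}A¹, where A^i denotes the degree-i component. -/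
section Aux
variable {k A : Type*} [Field k] [Ring A] [Algebra k A] (P : P0Data k A)

/-- projection onto the degree-`n` component -/
noncomputable def P0Data.proj (n : ℤ) : A →ₗ[k] A :=
  (P.grade n).subtype ∘ₗ
    (DirectSum.component k ℤ (fun i => (P.grade i : Type _)) n) ∘ₗ
    (LinearEquiv.ofBijective (DirectSum.coeLinearMap P.grade) P.internal).symm.toLinearMap

lemma P0Data.proj_of_mem_self {n : ℤ} {x : A} (hx : x ∈ P.grade n) : P.proj n x = x := by
  simp [P0Data.proj, DirectSum.component, DFinsupp.lapply,
    P.internal.ofBijective_coeLinearMap_of_mem hx]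

lemma P0Data.proj_of_mem_ne {m n : ℤ} (h : m ≠ n) {x : A} (hx : x ∈ P.grade m) :
    P.proj n x = 0 := by
  simp [P0Data.proj, DirectSum.component, DFinsupp.lapply,
    P.internal.ofBijective_coeLinearMap_of_mem_ne h hx]

end Aux


section Aux2
variable {k A : Type*} [Field k] [Ring A] [Algebra k A] (P : P0Data k A)

lemma P0Data.grade_le_filt {p q : ℤ} (hpq : p ≤ q) {x : A} (hx : x ∈ P.grade q) :
    x ∈ P.filt p :=
  Submodule.subset_span ⟨1, x, q, hpq, hx, (one_mul x).symm⟩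

/-- homogeneous-pair generators of degree 0 -/
def P0Data.S (p : ℤ) : Set A :=
  {x | ∃ (c d : A) (q : ℤ), p ≤ q ∧ c ∈ P.grade (-q) ∧ d ∈ P.grade q ∧ x = c * d}

lemma P0Data.filt_grade_zero_le_span {p : ℤ} {a : A} (haf : a ∈ P.filt p)
    (ha0 : a ∈ P.grade 0) : a ∈ Submodule.span k (P.S p) := by
  have key : ∀ x ∈ P.filt p, P.proj 0 x ∈ Submodule.span k (P.S p) := by
    intro x hx
    induction hx using Submodule.span_induction with
    | mem x hx =>
      obtain ⟨c, d, q, hpq, hd, rfl⟩ := hx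
      -- decompose c into homogeneous pieces
      have hc : c ∈ ⨆ i, P.grade i := by
        rw [P.internal.submodule_iSup_eq_top]; trivial
      have goal : c ∈ Submodule.comap ((P.proj 0).comp (LinearMap.mulRight k d))
          (Submodule.span k (P.S p)) := by
        have hle : (⨆ i, P.grade i) ≤ Submodule.comap
            ((P.proj 0).comp (LinearMap.mulRight k d)) (Submodule.span k (P.S p)) := by
          refine iSup_le fun m => ?_
          intro c hcm
          simp only [Submodule.mem_comap, LinearMap.comp_apply, LinearMap.mulRight_apply]
          by_cases hm : m + q = 0
          · rw [P.proj_of_mem_self (by rw [← hm] at *; exact P.mul_mem hcm hd)]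
            exact Submodule.subset_span ⟨c, d, q, hpq, by rwa [show -q = m by omega], hd, rfl⟩
          · rw [P.proj_of_mem_ne hm (P.mul_mem hcm hd)]
            exact Submodule.zero_mem _
        exact hle hc
      simpa using goal
    | zero => simp
    | add x y _ _ hx hy => rw [map_add]; exact Submodule.add_mem _ hx hy
    | smul t x _ hx => rw [map_smul]; exact Submodule.smul_mem _ _ hx
  have := key a haf
  rwa [P.proj_of_mem_self ha0] at this

/-- basic bracket lemma (i) on normalized generators -/
lemma P0Data.L1 {p q : ℤ} (hpq : p ≤ q) {c d b : A} (hc : c ∈ P.grade (-q))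
    (hd : d ∈ P.grade q) (hb : b ∈ P.grade 0) :
    P.bracket (c * d) b ∈ P.filt p := by
  rw [P.leibniz b hc hd]
  refine Submodule.add_mem _ ?_ (Submodule.smul_mem _ _ ?_)
  · exact Submodule.subset_span ⟨c, _, q + 0 + 1, by omega, P.bracket_mem hd hb, rfl⟩
  · rw [P.gcomm hd (P.bracket_mem hc hb)]
    exact Submodule.smul_mem _ _
      (Submodule.subset_span ⟨_, d, q, hpq, hd, rfl⟩)

/-- bracket lemma (ii) on normalized generators -/
lemma P0Data.L2 {p q s : ℤ} (hp : 1 ≤ p) (hpq : p ≤ q) (hps : p ≤ s)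
    {c d e f : A} (hc : c ∈ P.grade (-q)) (hd : d ∈ P.grade q)
    (he : e ∈ P.grade (-s)) (hf : f ∈ P.grade s) :
    P.bracket (c * d) (e * f) ∈ P.filt (p + 1) := by
  have hef : e * f ∈ P.grade (-s + s) := P.mul_mem he hf
  have t1 : c * (e * P.bracket f d) ∈ P.filt (p + 1) :=
    Submodule.subset_span ⟨c * e, _, s + q + 1, by omega, P.bracket_mem hf hd,
      (mul_assoc _ _ _).symm⟩
  have t2 : c * (f * P.bracket e d) ∈ P.filt (p + 1) :=
    Submodule.subset_span ⟨c, _, s + (-s + q + 1), by omega,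
      P.mul_mem hf (P.bracket_mem he hd), rfl⟩
  have t3 : d * (e * P.bracket f c) ∈ P.filt (p + 1) := by
    have h : d * (e * P.bracket f c) =
        ((-1 : k) ^ (q * -s)) • (e * (d * P.bracket f c)) := by
      rw [← mul_assoc, P.gcomm hd he, smul_mul_assoc, mul_assoc]
    rw [h]
    exact Submodule.smul_mem _ _ (Submodule.subset_span
      ⟨e, _, q + (s + -q + 1), by omega, P.mul_mem hd (P.bracket_mem hf hc), rfl⟩)
  have t4 : d * (f * P.bracket e c) ∈ P.filt (p + 1) := by
    have h : d * (f * P.bracket e c) =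
        ((-1 : k) ^ ((q + s) * (-s + -q + 1))) • (P.bracket e c * (d * f)) := by
      rw [← mul_assoc, P.gcomm (P.mul_mem hd hf) (P.bracket_mem he hc)]
    rw [h]
    exact Submodule.smul_mem _ _ (Submodule.subset_span
      ⟨_, d * f, q + s, by omega, P.mul_mem hd hf, rfl⟩)
  rw [P.leibniz (e * f) hc hd, P.antisymm hd hef, P.antisymm hc hef,
      P.leibniz d he hf, P.leibniz c he hf]
  simp only [mul_add, mul_neg, mul_smul_comm, smul_add, smul_neg, smul_smul, neg_add]
  exact Submodule.add_mem _
    (Submodule.add_mem _ (Submodule.neg_mem _ (Submodule.smul_mem _ _ t1))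
      (Submodule.neg_mem _ (Submodule.smul_mem _ _ t2)))
    (Submodule.add_mem _ (Submodule.neg_mem _ (Submodule.smul_mem _ _ t3))
      (Submodule.neg_mem _ (Submodule.smul_mem _ _ t4)))

end Aux2

/-- Lemma l-ooo. For all `p ≥ 0`:
(i) `[FᵖA⁰, A⁰] ⊆ FᵖA¹`; (ii) `[FᵖA⁰, FᵖA⁰] ⊆ F^{p+1}A¹`. -/
theorem bracket_filt_degree_zero {k A : Type*} [Field k] [CharZero k]
    [Ring A] [Algebra k A] (P : P0Data k A) :
    ∀ p : ℤ, 0 ≤ p →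
      (∀ a : A, a ∈ P.filt p → a ∈ P.grade 0 → ∀ b ∈ P.grade 0,
        P.bracket a b ∈ P.filt p ⊓ P.grade 1) ∧
      (∀ a b : A, a ∈ P.filt p → a ∈ P.grade 0 → b ∈ P.filt p → b ∈ P.grade 0 →
        P.bracket a b ∈ P.filt (p + 1) ⊓ P.grade 1) := by
  intro p hp
  constructor
  · intro a haf ha0 b hb0
    have key : ∀ x ∈ Submodule.span k (P.S p), P.bracket x b ∈ P.filt p := by
      intro x hx
      induction hx using Submodule.span_induction with
      | mem x hxg =>
        obtain ⟨c, d, q, hpq, hc, hd, rfl⟩ := hxg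
        exact P.L1 hpq hc hd hb0
      | zero => simp
      | add x y _ _ hx hy =>
        rw [map_add, LinearMap.add_apply]; exact Submodule.add_mem _ hx hy
      | smul t x _ hx =>
        rw [map_smul, LinearMap.smul_apply]; exact Submodule.smul_mem _ _ hx
    exact Submodule.mem_inf.mpr
      ⟨key a (P.filt_grade_zero_le_span haf ha0), by simpa using P.bracket_mem ha0 hb0⟩
  · intro a b haf ha0 hbf hb0
    have hg1 : P.bracket a b ∈ P.grade 1 := by simpa using P.bracket_mem ha0 hb0
    refine Submodule.mem_inf.mpr ⟨?_, hg1⟩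
    rcases eq_or_lt_of_le hp with h0 | hp1
    · exact P.grade_le_filt (by omega) hg1
    · have hp1 : 1 ≤ p := hp1
      have key : ∀ y ∈ Submodule.span k (P.S p), ∀ x ∈ Submodule.span k (P.S p),
          P.bracket x y ∈ P.filt (p + 1) := by
        intro y hy
        induction hy using Submodule.span_induction with
        | mem y hyg =>
          intro x hx
          induction hx using Submodule.span_induction with
          | mem x hxg =>
            obtain ⟨c, d, q, hpq, hc, hd, rfl⟩ := hxg
            obtain ⟨e, f, s, hps, he, hf, rfl⟩ := hyg
            exact P.L2 hp1 hpq hps hc hd he hf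
          | zero => simp
          | add x₁ x₂ _ _ h₁ h₂ =>
            rw [map_add, LinearMap.add_apply]; exact Submodule.add_mem _ h₁ h₂
          | smul t x₁ _ h₁ =>
            rw [map_smul, LinearMap.smul_apply]; exact Submodule.smul_mem _ _ h₁
        | zero => intro x hx; simp
        | add y₁ y₂ _ _ h₁ h₂ =>
          intro x hx
          rw [map_add]; exact Submodule.add_mem _ (h₁ x hx) (h₂ x hx)
        | smul t y₁ _ h₁ =>
          intro x hx
          rw [map_smul]; exact Submodule.smul_mem _ _ (h₁ x hx)
      exact key b (P.filt_grade_zero_le_span hbf hb0) a (P.filt_grade_zero_le_span haf ha0)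
end

section
/- Let (A, [·,·]) be a P₀-algebra, S ∈ A⁰ with [S,S] = 0, and let a ∈ A^{-1} be such that the operator ad_a = [a,·] is locally nilpotent and exp(ad_a)(S) = S. Then [a,S] = 0. Consequently, if in addition there exists b ∈ A^{-2} with a = [S,b], then the automorphism exp(ad_a) of the complex (A, d_S) is chain homotopic to the identity via the homotopy ad_b up to the standard BCH correction; in particular exp(ad_a) induces the identity on the cohomology H(A, d_S). -/
open scoped Classical in
/-- Exponential of a locally nilpotent endomorphism (over a field of characteristic 0). -/
noncomputable def locExp {k M : Type*} [Field k] [CharZero k] [AddCommGroup M] [Module k M]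
    (f : M →ₗ[k] M) (h : ∀ m : M, ∃ n : ℕ, (f ^ n) m = 0) (m : M) : M :=
  ∑ i ∈ Finset.range (Nat.find (h m)), ((Nat.factorial i : k)⁻¹) • (f ^ i) m


section Aux

variable {k M : Type*} [Field k] [CharZero k] [AddCommGroup M] [Module k M]

lemma pow_apply_eq_zero_of_le (f : M →ₗ[k] M) (v : M) (N : ℕ) (h : (f ^ N) v = 0) :
    ∀ i, N ≤ i → (f ^ i) v = 0 := by
  intro i hi
  obtain ⟨j, rfl⟩ := Nat.exists_eq_add_of_le hi
  rw [add_comm, pow_add, Module.End.mul_apply, h, map_zero]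

lemma sum_factorial_smul_eq_zero (f : M →ₗ[k] M) :
    ∀ (m : ℕ) (v : M), (f ^ m) v = 0 →
      (∑ j ∈ Finset.range m, ((Nat.factorial (j + 1) : k))⁻¹ • (f ^ j) v) = 0 → v = 0 := by
  intro m
  induction m with
  | zero => intro v hv _; simpa using hv
  | succ m ih =>
    intro v hv hsum
    have hfm : (f ^ m) v = 0 := by
      have h1 : (f ^ m) (∑ j ∈ Finset.range (m + 1),
          ((Nat.factorial (j + 1) : k))⁻¹ • (f ^ j) v) = 0 := by rw [hsum]; exact map_zero _
      rw [map_sum, Finset.sum_range_succ'] at h1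
      have hz : ∀ j ∈ Finset.range m,
          (f ^ m) (((Nat.factorial (j + 1 + 1) : k))⁻¹ • (f ^ (j + 1)) v) = 0 := by
        intro j _
        rw [map_smul]
        have h2 : (f ^ m) ((f ^ (j + 1)) v) = (f ^ (m + (j + 1))) v := by
          rw [pow_add f m (j + 1), Module.End.mul_apply]
        rw [h2, pow_apply_eq_zero_of_le f v (m + 1) hv _ (by omega), smul_zero]
      rw [Finset.sum_eq_zero hz, zero_add] at h1
      simpa [Nat.factorial] using h1
    apply ih v hfm
    rw [Finset.sum_range_succ, hfm, smul_zero, add_zero] at hsum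
    exact hsum

open scoped Classical in
lemma locExp_eq_sum' (f : M →ₗ[k] M) (h : ∀ m : M, ∃ n : ℕ, (f ^ n) m = 0) (x : M)
    (N : ℕ) (hN : (f ^ N) x = 0) :
    locExp f h x = ∑ i ∈ Finset.range N, ((Nat.factorial i : k))⁻¹ • (f ^ i) x := by
  have hext : ∀ p q : ℕ, p ≤ q → (f ^ p) x = 0 →
      (∑ i ∈ Finset.range q, ((Nat.factorial i : k))⁻¹ • (f ^ i) x)
        = ∑ i ∈ Finset.range p, ((Nat.factorial i : k))⁻¹ • (f ^ i) x := by
    intro p q hpq hp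
    symm
    apply Finset.sum_subset (Finset.range_subset_range.mpr hpq)
    intro i _ hip
    rw [pow_apply_eq_zero_of_le f x p hp i (by simpa using hip), smul_zero]
  unfold locExp
  rcases le_total (Nat.find (h x)) N with hle | hle
  · rw [← hext _ N hle (Nat.find_spec (h x))]
  · rw [← hext N _ hle hN]

lemma negpow_eq_of_shift {k : Type*} [Field k] (m n c : ℤ) (h : m = n + 2 * c) :
    (-1 : k) ^ m = (-1 : k) ^ n := by
  subst h
  rw [zpow_add₀ (by norm_num : (-1 : k) ≠ 0), zpow_mul]
  norm_num

lemma negpow_even_shift {k : Type*} [Field k] (m t c : ℤ) (h : m = t + 2 * c) :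
    (-1 : k) ^ m = (-1 : k) ^ t := negpow_eq_of_shift m t c h

lemma negpow_odd_shift {k : Type*} [Field k] (m t c : ℤ) (h : m = t + 1 + 2 * c) :
    (-1 : k) ^ m = -(-1 : k) ^ t := by
  rw [negpow_eq_of_shift m (t + 1) c h, zpow_add₀ (by norm_num : (-1 : k) ≠ 0), zpow_one]
  ring

end Aux

/-- If `[S,S] = 0`, `a ∈ A^{-1}` has locally nilpotent `ad_a` and
`exp(ad_a) S = S`, then `[a,S] = 0`.  If moreover `a = [S,b]` with `b ∈ A^{-2}`, then
`ad_a = d_S ∘ ad_b + ad_b ∘ d_S` and `exp(ad_a)` induces the identity on the cohomology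
of `(A, d_S)`. -/
theorem gauge_fixing_acts_trivially {k A : Type*} [Field k] [CharZero k]
    [Ring A] [Algebra k A] (P : P0Data k A) (S a : A)
    (hS : S ∈ P.grade 0) (hmaster : P.bracket S S = 0)
    (ha : a ∈ P.grade (-1))
    (hnil : ∀ x : A, ∃ n : ℕ, ((P.bracket a) ^ n) x = 0)
    (hfix : locExp (P.bracket a) hnil S = S) :
    P.bracket a S = 0 ∧
    (∀ b : A, b ∈ P.grade (-2) → a = P.bracket S b →
      (∀ x : A, P.bracket a x =
        P.bracket S (P.bracket b x) + P.bracket b (P.bracket S x)) ∧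
      (∀ x : A, P.bracket S x = 0 →
        ∃ y : A, locExp (P.bracket a) hnil x - x = P.bracket S y)) := by
  have hneg : (-1 : k) ≠ 0 := by norm_num
  -- extension of identities from homogeneous components to all of `A`
  have hallgrade : ∀ g : A →ₗ[k] A,
      (∀ (t : ℤ) (z : A), z ∈ P.grade t → g z = 0) → ∀ x : A, g x = 0 := by
    intro g hg x
    have htop : iSup P.grade = ⊤ := P.internal.submodule_iSup_eq_top
    have hle : (⊤ : Submodule k A) ≤ LinearMap.ker g := by
      rw [← htop]
      exact iSup_le fun t z hz => LinearMap.mem_ker.mpr (hg t z hz)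
    exact LinearMap.mem_ker.mp (hle Submodule.mem_top)
  constructor
  · -- Part 1 : [a, S] = 0
    obtain ⟨n, hn⟩ := hnil S
    rw [locExp_eq_sum' (P.bracket a) hnil S n hn] at hfix
    cases n with
    | zero =>
      simp only [Finset.range_zero, Finset.sum_empty] at hfix
      rw [← hfix, map_zero]
    | succ m =>
      rw [Finset.sum_range_succ'] at hfix
      simp only [pow_zero, Module.End.one_apply, Nat.factorial_zero, Nat.cast_one,
        inv_one, one_smul] at hfix
      have hsum0 := eq_sub_of_add_eq hfix
      rw [sub_self] at hsum0
      have hsum1 : ∑ i ∈ Finset.range m,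
          ((Nat.factorial (i + 1) : k))⁻¹ • ((P.bracket a) ^ i) (P.bracket a S) = 0 := by
        rw [← hsum0]
        exact Finset.sum_congr rfl fun i _ => by rw [pow_succ, Module.End.mul_apply]
      have hfm : ((P.bracket a) ^ m) (P.bracket a S) = 0 := by
        rw [← Module.End.mul_apply, ← pow_succ]
        exact hn
      exact sum_factorial_smul_eq_zero (P.bracket a) m (P.bracket a S) hfm hsum1
  · -- Part 2
    intro b hb hab
    -- `d_S ∘ d_S = 0`
    have hds2 : ∀ x : A, P.bracket S (P.bracket S x) = 0 := by
      have h0 : ∀ x : A, ((P.bracket S) ∘ₗ (P.bracket S)) x = 0 := by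
        apply hallgrade
        intro t z hz
        simp only [LinearMap.comp_apply]
        have hm0 : P.bracket (P.bracket S S) z = 0 := by
          rw [hmaster, map_zero]; rfl
        have hJ := P.jacobi hS hS hz
        rw [negpow_odd_shift ((0 - 1) * (t - 1)) t (-t) (by ring),
          (by norm_num : ((-1 : k) ^ (((0 : ℤ) - 1) * (0 - 1))) = -1),
          negpow_odd_shift ((t - 1) * (0 - 1)) t (-t) (by ring)] at hJ
        have hA := P.antisymm hz hS
        rw [negpow_odd_shift ((t - 1) * (0 - 1)) t (-t) (by ring)] at hA
        have hA' : P.bracket (P.bracket z S) S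
            = -((-(-1 : k) ^ t) • P.bracket (P.bracket S z) S) := by
          rw [hA, map_neg, map_smul, LinearMap.neg_apply, LinearMap.smul_apply]
        have hW := P.antisymm (P.bracket_mem hS hz) hS
        rw [negpow_even_shift ((0 + t + 1 - 1) * (0 - 1)) t (-t) (by ring)] at hW
        have hc : ((-1 : k) ^ t) * ((-1 : k) ^ t) = 1 := by
          rw [← zpow_add₀ hneg, negpow_eq_of_shift (t + t) 0 t (by ring), zpow_zero]
        rcases mul_self_eq_one_iff.mp hc with hc1 | hc1 <;>
          rw [hc1] at hJ hA' hW
        · linear_combination (norm := module)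
            ((1 / 2 : k)) • hJ + ((1 / 2 : k)) • hA' + (1 : k) • hW + ((1 / 2 : k)) • hm0
        · linear_combination (norm := module)
            ((-1 / 2 : k)) • hJ + ((1 / 2 : k)) • hA' + ((-1 : k)) • hW + ((1 / 2 : k)) • hm0
      intro x
      simpa using h0 x
    -- the homotopy formula `ad_a = d_S ∘ ad_b + ad_b ∘ d_S`
    have hform : ∀ x : A, P.bracket a x
        = P.bracket S (P.bracket b x) + P.bracket b (P.bracket S x) := by
      have h0 : ∀ x : A, ((P.bracket a)
          - ((P.bracket S) ∘ₗ (P.bracket b) + (P.bracket b) ∘ₗ (P.bracket S))) x = 0 := by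
        apply hallgrade
        intro t x hx
        simp only [LinearMap.sub_apply, LinearMap.add_apply, LinearMap.comp_apply]
        rw [sub_eq_zero, hab]
        have hJ := P.jacobi hS hb hx
        rw [negpow_odd_shift ((0 - 1) * (t - 1)) t (-t) (by ring),
          (by norm_num : ((-1 : k) ^ ((((-2 : ℤ)) - 1) * (0 - 1))) = -1),
          negpow_odd_shift ((t - 1) * (-2 - 1)) t (-2 * t + 1) (by ring)] at hJ
        have hA1 := P.antisymm (P.bracket_mem hb hx) hS
        rw [negpow_even_shift ((-2 + t + 1 - 1) * (0 - 1)) t (1 - t) (by ring)] at hA1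
        have hA2 := P.antisymm hx hS
        rw [negpow_odd_shift ((t - 1) * (0 - 1)) t (-t) (by ring)] at hA2
        have hA2' : P.bracket (P.bracket x S) b
            = -((-(-1 : k) ^ t) • P.bracket (P.bracket S x) b) := by
          rw [hA2, map_neg, map_smul, LinearMap.neg_apply, LinearMap.smul_apply]
        have hA3 := P.antisymm (P.bracket_mem hS hx) hb
        rw [negpow_even_shift ((0 + t + 1 - 1) * (-2 - 1)) t (-2 * t) (by ring)] at hA3
        have hc : ((-1 : k) ^ t) * ((-1 : k) ^ t) = 1 := by
          rw [← zpow_add₀ hneg, negpow_eq_of_shift (t + t) 0 t (by ring), zpow_zero]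
        rcases mul_self_eq_one_iff.mp hc with hc1 | hc1 <;>
          rw [hc1] at hJ hA1 hA2' hA3
        · linear_combination (norm := module)
            ((-1 : k)) • hJ + ((-1 : k)) • hA1 + ((-1 : k)) • hA2' + ((-1 : k)) • hA3
        · linear_combination (norm := module)
            ((1 : k)) • hJ + ((1 : k)) • hA1 + ((-1 : k)) • hA2' + ((1 : k)) • hA3
      intro x
      have hx0 := h0 x
      simp only [LinearMap.sub_apply, LinearMap.add_apply, LinearMap.comp_apply,
        sub_eq_zero] at hx0
      exact hx0
    refine ⟨hform, ?_⟩
    -- Part 3 : `exp(ad_a)` is the identity on `d_S`-cocycles up to a coboundary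
    intro x hx
    obtain ⟨N, hN⟩ := hnil x
    rw [locExp_eq_sum' (P.bracket a) hnil x N hN]
    have hSpow : ∀ i : ℕ, P.bracket S (((P.bracket a) ^ i) x) = 0 := by
      intro i
      induction i with
      | zero => simpa using hx
      | succ i ih =>
        have hstep : ((P.bracket a) ^ (i + 1)) x
            = P.bracket S (P.bracket b (((P.bracket a) ^ i) x)) := by
          rw [pow_succ', Module.End.mul_apply, hform, ih, map_zero, add_zero]
        rw [hstep]
        exact hds2 _
    have hstep : ∀ i : ℕ, ((P.bracket a) ^ (i + 1)) x
        = P.bracket S (P.bracket b (((P.bracket a) ^ i) x)) := by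
      intro i
      rw [pow_succ', Module.End.mul_apply, hform, hSpow i, map_zero, add_zero]
    have hsum : (∑ i ∈ Finset.range N, ((Nat.factorial i : k))⁻¹ • ((P.bracket a) ^ i) x) - x
        ∈ LinearMap.range (P.bracket S) := by
      cases N with
      | zero =>
        have hx0 : x = 0 := by simpa using hN
        simp [hx0]
      | succ m =>
        rw [Finset.sum_range_succ']
        simp only [pow_zero, Module.End.one_apply, Nat.factorial_zero, Nat.cast_one,
          inv_one, one_smul]
        rw [add_sub_cancel_right]
        apply Submodule.sum_mem
        intro i _
        exact Submodule.smul_mem _ _ ⟨P.bracket b (((P.bracket a) ^ i) x), (hstep i).symm⟩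
    obtain ⟨y, hy⟩ := hsum
    exact ⟨y, hy.symm⟩
end

section
/- Let X be a smooth affine variety over a field k of characteristic 0 (or work with the commutative k-algebra O = O(X) and its module of derivations T = Der(O)), and let S₀ ∈ O. Let I = {ξ(S₀) : ξ ∈ T} ⊆ O be the image of dS₀, let L = {ξ ∈ T : ξ(S₀) = 0}, and let L₀ ⊆ L be the O-submodule spanned by ξ(S₀)η - η(S₀)ξ for ξ, η ∈ T. Then (I, L₀) is an ideal of the Lie–Rinehart algebra (O, L): (i) I is an ideal of O; (ii) L₀ is a Lie ideal of L; (iii) f·τ ∈ L₀ and τ(f) ∈ I for all f ∈ I, τ ∈ L; (iv) g·σ ∈ L₀ and σ(g) ∈ I for all g ∈ O, σ ∈ L₀. -/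
private lemma bracket_smul_aux {k O : Type*} [CommRing k] [CommRing O] [Algebra k O]
    (τ σ : Derivation k O O) (f : O) :
    ⁅τ, f • σ⁆ = τ f • σ + f • ⁅τ, σ⁆ := by
  ext a
  simp only [Derivation.commutator_apply, Derivation.smul_apply, Derivation.add_apply,
    smul_eq_mul, Derivation.leibniz]
  ring

/-- For a regular function `S₀` on a smooth affine variety (formulated
for a commutative `k`-algebra `O` with derivations `T = Der_k(O)`): with
`I = {ξ(S₀) : ξ ∈ T}`, `L = {ξ : ξ(S₀) = 0}` and `L₀` the `O`-span of the fields
`ξ(S₀)η - η(S₀)ξ`, the pair `(I, L₀)` is an ideal of the Lie–Rinehart algebra `(O, L)`: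
(i) `I` is an ideal of `O`; (ii) `L₀ ⊆ L` is a Lie ideal of `L`;
(iii) `I·L ⊆ L₀` and `L(I) ⊆ I`; (iv) `O·L₀ ⊆ L₀` and `L₀(O) ⊆ I`. -/
theorem symmetry_ideal_of_action {k O : Type*} [Field k] [CharZero k]
    [CommRing O] [Algebra k O] (S₀ : O) :
    let Iset : Set O := {x | ∃ ξ : Derivation k O O, ξ S₀ = x}
    let L₀ : Submodule O (Derivation k O O) :=
      Submodule.span O {τ | ∃ ξ η : Derivation k O O, τ = ξ S₀ • η - η S₀ • ξ}
    -- (i) I is an ideal of O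
    ((∀ x ∈ Iset, ∀ y ∈ Iset, x + y ∈ Iset) ∧ (∀ f : O, ∀ x ∈ Iset, f * x ∈ Iset)) ∧
    -- (ii) L₀ ⊆ L is a Lie ideal of L
    ((∀ σ ∈ L₀, σ S₀ = 0) ∧
      (∀ τ : Derivation k O O, τ S₀ = 0 → ∀ σ ∈ L₀, ⁅τ, σ⁆ ∈ L₀)) ∧
    -- (iii) I·L ⊆ L₀ and L(I) ⊆ I
    (∀ x ∈ Iset, ∀ τ : Derivation k O O, τ S₀ = 0 → x • τ ∈ L₀ ∧ τ x ∈ Iset) ∧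
    -- (iv) O·L₀ ⊆ L₀ and L₀(O) ⊆ I
    (∀ f : O, ∀ σ ∈ L₀, f • σ ∈ L₀ ∧ σ f ∈ Iset) := by
  intro Iset L₀
  have hzero : ∀ σ ∈ L₀, σ S₀ = 0 := by
    intro σ hσ
    induction hσ using Submodule.span_induction with
    | mem x hx =>
      obtain ⟨ξ, η, rfl⟩ := hx
      simp [Derivation.smul_apply, smul_eq_mul, mul_comm]
    | zero => simp
    | add x y _ _ hx hy => simp [hx, hy]
    | smul r x _ hx => simp [hx]
  refine ⟨⟨?_, ?_⟩, ⟨hzero, ?_⟩, ?_, ?_⟩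
  · rintro x ⟨ξ, rfl⟩ y ⟨η, rfl⟩
    exact ⟨ξ + η, rfl⟩
  · rintro f x ⟨ξ, rfl⟩
    exact ⟨f • ξ, rfl⟩
  · intro τ hτ σ hσ
    induction hσ using Submodule.span_induction with
    | mem x hx =>
      obtain ⟨ξ, η, rfl⟩ := hx
      have key : ⁅τ, ξ S₀ • η - η S₀ • ξ⁆ =
          ((⁅τ, ξ⁆ S₀) • η - η S₀ • ⁅τ, ξ⁆) + (ξ S₀ • ⁅τ, η⁆ - (⁅τ, η⁆ S₀) • ξ) := by
        have hτξ : ⁅τ, ξ⁆ S₀ = τ (ξ S₀) := by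
          simp [Derivation.commutator_apply, hτ]
        have hτη : ⁅τ, η⁆ S₀ = τ (η S₀) := by
          simp [Derivation.commutator_apply, hτ]
        rw [lie_sub, bracket_smul_aux, bracket_smul_aux, hτξ, hτη]
        abel
      rw [key]
      exact Submodule.add_mem _
        (Submodule.subset_span ⟨⁅τ, ξ⁆, η, rfl⟩)
        (Submodule.subset_span ⟨ξ, ⁅τ, η⁆, rfl⟩)
    | zero => simp
    | add x y hx hy ihx ihy => simpa [lie_add] using Submodule.add_mem _ ihx ihy
    | smul r x hx ih =>
      rw [bracket_smul_aux]
      exact Submodule.add_mem _ (Submodule.smul_mem _ _ hx) (Submodule.smul_mem _ _ ih)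
  · rintro x ⟨ξ, rfl⟩ τ hτ
    constructor
    · have : ξ S₀ • τ = ξ S₀ • τ - τ S₀ • ξ := by rw [hτ]; simp
      rw [this]
      exact Submodule.subset_span ⟨ξ, τ, rfl⟩
    · refine ⟨⁅τ, ξ⁆, ?_⟩
      simp [Derivation.commutator_apply, hτ]
  · intro f σ hσ
    refine ⟨Submodule.smul_mem _ _ hσ, ?_⟩
    induction hσ using Submodule.span_induction with
    | mem x hx =>
      obtain ⟨ξ, η, rfl⟩ := hx
      refine ⟨(η f) • ξ - (ξ f) • η, ?_⟩
      simp only [Derivation.sub_apply, Derivation.smul_apply, smul_eq_mul]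
      ring
    | zero => exact ⟨0, by simp⟩
    | add x y _ _ ihx ihy =>
      obtain ⟨a, ha⟩ := ihx; obtain ⟨b, hb⟩ := ihy
      exact ⟨a + b, by simp [ha, hb]⟩
    | smul r x _ ih =>
      obtain ⟨a, ha⟩ := ih
      exact ⟨r • a, by simp [ha]⟩
end

section
/- Let g be a finite dimensional Lie algebra over a field k of characteristic 0 with basis β₁*,…,β_m*, structure constants [βᵢ*, βⱼ*] = Σ_ℓ c_{ij}^ℓ β_ℓ*, acting on a commutative k-algebra O by derivations θᵢ = θ(βᵢ*). Let S₀ ∈ O be g-invariant (θᵢ(S₀) = 0 for all i). In the P₀-algebra A = Λ_O(Der(O)) ⊗ Sym(g) ⊗ Λ(g*) (with Der(O) in degree -1, g in degree -2, g* in degree 1, and the canonical bracket of degree 1 pairing g with g* and Der(O) with O), the Faddeev–Popov element S = S₀ + Σᵢ θᵢ βⁱ - ½ Σ_{i,j,ℓ} c_{ij}^ℓ β_ℓ* βⁱ βʲ satisfies the classical master equation [S,S] = 0. -/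
/-!
Write `S = S₀ + y - ½ C` with `y = Σ θᵢ βⁱ`, `C = Σ_ℓ β_ℓ* γ_ℓ` and `γ_ℓ = Σ c_{ij}^ℓ βⁱ βʲ`.
All three pieces have degree `0`, where the bracket is symmetric, so
`[S,S] = 2[S₀,y] - [S₀,C] + [y,y] - [y,C] + ¼[C,C]`.
Invariance of `S₀` kills the first two terms. Both `[y,y]` (the action `[θᵢ,θⱼ] = c_{ij}^ℓ θ_ℓ`)
and `[y,C]` (pairing `β_ℓ*` with `βˡ`) equal `Σ θ_ℓ γ_ℓ`, so they cancel. Finally `[C,C]` is a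
combination of the cubic ghost sums `Σ c_{ab}^t c_{td}^n βᵃ βᵇ βᵈ`; since the monomial `βᵃ βᵇ βᵈ` is
invariant under cyclic permutations, such a sum is a third of the Jacobiator contracted with it,
hence zero.
-/

theorem neg_one_zpow_eq_of_even_sub {α : Type*} [DivisionMonoid α] [HasDistribNeg α] {a b : ℤ}
    (h : Even (a - b)) : (-1 : α) ^ a = (-1 : α) ^ b := by
  simp only [neg_one_zpow_eq_ite, Int.even_sub.mp h]

namespace P0Data

variable {k A : Type*} [Field k] [Ring A] [Algebra k A] (P : P0Data k A)

theorem mul_mem_of_add_eq {r s t : ℤ} {a b : A} (h : r + s = t) (ha : a ∈ P.grade r)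
    (hb : b ∈ P.grade s) : a * b ∈ P.grade t :=
  h ▸ P.mul_mem ha hb

theorem bracket_comm_of_mem_zero {a b : A} (ha : a ∈ P.grade 0) (hb : b ∈ P.grade 0) :
    P.bracket a b = P.bracket b a := by
  simpa using P.antisymm ha hb

theorem bracket_mul_right {r s t : ℤ} {x b c : A} (hx : x ∈ P.grade r) (hb : b ∈ P.grade s)
    (hc : c ∈ P.grade t) :
    P.bracket x (b * c) = P.bracket x b * c + (-1 : k) ^ ((r - 1) * s) • (b * P.bracket x c) := by
  have sign_b : (-1 : k) ^ ((r - 1) * (s + t - 1) + (t - 1) * (r - 1)) = (-1) ^ ((r - 1) * s) :=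
    neg_one_zpow_eq_of_even_sub ⟨(r - 1) * (t - 1), by ring⟩
  have sign_c : (-1 : k) ^ ((r - 1) * (s + t - 1) + (s * t + ((s - 1) * (r - 1) + t * (r + s + 1))))
      = 1 :=
    (neg_one_zpow_eq_of_even_sub ⟨(r - 1) * (s - 1) + r * t + s * t, by ring⟩).trans (zpow_zero _)
  rw [P.antisymm hx (P.mul_mem hb hc), P.leibniz x hb hc, P.antisymm hc hx, P.antisymm hb hx,
    mul_neg, mul_smul_comm, mul_neg, mul_smul_comm, P.gcomm hc (P.bracket_mem hx hb)]
  simp only [smul_neg, neg_add, neg_neg, smul_add, smul_smul,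
    ← zpow_add₀ (by norm_num : (-1 : k) ≠ 0), sign_b, sign_c, one_smul]
  exact add_comm _ _

end P0Data

theorem sum_jacobi_smul_eq_zero {k V I : Type*} [Field k] [CharZero k] [AddCommGroup V]
    [Module k V] [Fintype I] (c : I → I → I → k)
    (hc_jac : ∀ i j l n, ∑ t, (c i j t * c t l n + c j l t * c t i n + c l i t * c t j n) = 0)
    (T : I → I → I → V) (hT : ∀ a b d, T a b d = T b d a) (n : I) :
    ∑ a, ∑ b, ∑ d, (∑ t, c a b t * c t d n) • T a b d = 0 := by
  set F : I → I → I → V := fun a b d => (∑ t, c a b t * c t d n) • T a b d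
  have h₂ : ∑ a, ∑ b, ∑ d, (∑ t, c b d t * c t a n) • T a b d = ∑ a, ∑ b, ∑ d, F a b d := by
    rw [Finset.sum_comm_cycle (f := F)]
    exact Fintype.sum_congr _ _ fun a => Fintype.sum_congr _ _ fun b =>
      Fintype.sum_congr _ _ fun d => by rw [hT a b d]
  have h₃ : ∑ a, ∑ b, ∑ d, (∑ t, c d a t * c t b n) • T a b d = ∑ a, ∑ b, ∑ d, F a b d := by
    rw [Finset.sum_comm_cycle (f := F), Finset.sum_comm_cycle (f := fun a b d => F b d a)]
    exact Fintype.sum_congr _ _ fun a => Fintype.sum_congr _ _ fun b =>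
      Fintype.sum_congr _ _ fun d => by rw [← hT d a b]
  have jacobi : ∑ a, ∑ b, ∑ d,
      (∑ t, (c a b t * c t d n + c b d t * c t a n + c d a t * c t b n)) • T a b d = 0 := by
    simp only [hc_jac, zero_smul, Finset.sum_const_zero]
  simp only [Finset.sum_add_distrib, add_smul, h₂, h₃] at jacobi
  have : (3 : k) • ∑ a, ∑ b, ∑ d, F a b d = 0 := by
    rw [← jacobi]; module
  exact (smul_eq_zero.mp this).resolve_left three_ne_zero

section FaddeevPopov

variable {k A I : Type*} [Field k] [Ring A] [Algebra k A] [Fintype I]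

-- In the notation of the header: `ghostQuadratic c β ℓ = γ_ℓ`, `gaugeTerm ξ β = y` and
-- `ghostTerm c β βs = C`, with `ξ i` standing for `θᵢ` and `βs ℓ` for `β_ℓ*`.
def ghostQuadratic (c : I → I → I → k) (β : I → A) (l : I) : A :=
  ∑ i, ∑ j, c i j l • (β i * β j)

def gaugeTerm (ξ β : I → A) : A :=
  ∑ i, ξ i * β i

def ghostTerm (c : I → I → I → k) (β βs : I → A) : A :=
  ∑ l, βs l * ghostQuadratic c β l

theorem sum_smul_mul_mul_eq_ghostTerm (c : I → I → I → k) (β βs : I → A) :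
    ∑ i, ∑ j, ∑ l, c i j l • (βs l * β i * β j) = ghostTerm c β βs := by
  simp only [ghostTerm, ghostQuadratic, Finset.mul_sum, mul_smul_comm, mul_assoc]
  exact Finset.sum_comm_cycle

theorem sum_smul_ghostQuadratic (c : I → I → I → k) (β : I → A) (d n : I) :
    ∑ t, c t d n • ghostQuadratic c β t = ∑ a, ∑ b, (∑ t, c a b t * c t d n) • (β a * β b) := by
  simp only [ghostQuadratic, Finset.smul_sum, smul_smul, Finset.sum_smul]
  rw [Finset.sum_comm_cycle (f := fun a b t => (c a b t * c t d n) • (β a * β b))]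
  simp only [mul_comm]

namespace P0Data

variable (P : P0Data k A) {c : I → I → I → k} {ξ β βs : I → A}

theorem ghostQuadratic_mem (hβ : ∀ i, β i ∈ P.grade 1) (l : I) :
    ghostQuadratic c β l ∈ P.grade 2 :=
  Submodule.sum_mem _ fun i _ => Submodule.sum_mem _ fun j _ =>
    Submodule.smul_mem _ _ (P.mul_mem_of_add_eq (by norm_num) (hβ i) (hβ j))

theorem gaugeTerm_mem (hξ : ∀ i, ξ i ∈ P.grade (-1)) (hβ : ∀ i, β i ∈ P.grade 1) :
    gaugeTerm ξ β ∈ P.grade 0 :=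
  Submodule.sum_mem _ fun i _ => P.mul_mem_of_add_eq (by norm_num) (hξ i) (hβ i)

theorem ghostTerm_mem (hβ : ∀ i, β i ∈ P.grade 1) (hβs : ∀ i, βs i ∈ P.grade (-2)) :
    ghostTerm c β βs ∈ P.grade 0 :=
  Submodule.sum_mem _ fun l _ =>
    P.mul_mem_of_add_eq (by norm_num) (hβs l) (P.ghostQuadratic_mem hβ l)

theorem sum_smul_ghostQuadratic_mul_eq_zero [CharZero k]
    (hc_jac : ∀ i j l n, ∑ t, (c i j t * c t l n + c j l t * c t i n + c l i t * c t j n) = 0)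
    (hβ : ∀ i, β i ∈ P.grade 1) (n : I) :
    ∑ i, ∑ j, c i j n • (ghostQuadratic c β i * β j) = 0 := by
  have hcyc : ∀ a b d, β a * β b * β d = β b * β d * β a := fun a b d => by
    rw [mul_assoc, P.gcomm (hβ a) (P.mul_mem (hβ b) (hβ d))]
    norm_num
  rw [← sum_jacobi_smul_eq_zero c hc_jac _ hcyc n, Finset.sum_comm]
  simp only [← smul_mul_assoc, ← Finset.sum_mul, sum_smul_ghostQuadratic]
  simp only [Finset.sum_mul, smul_mul_assoc]
  exact Finset.sum_comm_cycle.symm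

theorem sum_smul_mul_ghostQuadratic_eq_zero [CharZero k] (hc_anti : ∀ i j l, c i j l = -c j i l)
    (hc_jac : ∀ i j l n, ∑ t, (c i j t * c t l n + c j l t * c t i n + c l i t * c t j n) = 0)
    (hβ : ∀ i, β i ∈ P.grade 1) (n : I) :
    ∑ i, ∑ j, c i j n • (β i * ghostQuadratic c β j) = 0 := by
  have hcomm : ∀ i j, β i * ghostQuadratic c β j = ghostQuadratic c β j * β i := fun i j => by
    rw [P.gcomm (hβ i) (P.ghostQuadratic_mem hβ j)]
    norm_num
  calc ∑ i, ∑ j, c i j n • (β i * ghostQuadratic c β j)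
      _ = -∑ i, ∑ j, c i j n • (ghostQuadratic c β i * β j) := by
        rw [Finset.sum_comm, ← Finset.sum_neg_distrib]
        exact Fintype.sum_congr _ _ fun i => by
          rw [← Finset.sum_neg_distrib]
          exact Fintype.sum_congr _ _ fun j => by rw [hcomm, hc_anti, neg_smul]
      _ = 0 := by rw [P.sum_smul_ghostQuadratic_mul_eq_zero hc_jac hβ n, neg_zero]

theorem bracket_mul_eq_zero {r s t : ℤ} {x b d : A} (hx : x ∈ P.grade r) (hb : b ∈ P.grade s)
    (hd : d ∈ P.grade t) (hxb : P.bracket x b = 0) (hxd : P.bracket x d = 0) :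
    P.bracket x (b * d) = 0 := by
  rw [P.bracket_mul_right hx hb hd, hxb, hxd, zero_mul, mul_zero, smul_zero, add_zero]

theorem bracket_ghostQuadratic_eq_zero {r : ℤ} {x : A} (hx : x ∈ P.grade r)
    (hβ : ∀ i, β i ∈ P.grade 1) (hxβ : ∀ i, P.bracket x (β i) = 0) (l : I) :
    P.bracket x (ghostQuadratic c β l) = 0 := by
  simp [ghostQuadratic, P.bracket_mul_eq_zero hx (hβ _) (hβ _) (hxβ _) (hxβ _)]

theorem bracket_gaugeTerm_eq_zero {r : ℤ} {x : A} (hx : x ∈ P.grade r)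
    (hξ : ∀ i, ξ i ∈ P.grade (-1)) (hβ : ∀ i, β i ∈ P.grade 1)
    (hxξ : ∀ i, P.bracket x (ξ i) = 0) (hxβ : ∀ i, P.bracket x (β i) = 0) :
    P.bracket x (gaugeTerm ξ β) = 0 := by
  simp [gaugeTerm, P.bracket_mul_eq_zero hx (hξ _) (hβ _) (hxξ _) (hxβ _)]

theorem bracket_ghostTerm_eq_zero {r : ℤ} {x : A} (hx : x ∈ P.grade r)
    (hβ : ∀ i, β i ∈ P.grade 1) (hβs : ∀ i, βs i ∈ P.grade (-2))
    (hxβ : ∀ i, P.bracket x (β i) = 0) (hxβs : ∀ i, P.bracket x (βs i) = 0) :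
    P.bracket x (ghostTerm c β βs) = 0 := by
  simp [ghostTerm, P.bracket_mul_eq_zero hx (hβs _) (P.ghostQuadratic_mem hβ _) (hxβs _)
    (P.bracket_ghostQuadratic_eq_zero hx hβ hxβ _)]

theorem bracket_gaugeTerm_beta (hξ : ∀ i, ξ i ∈ P.grade (-1)) (hβ : ∀ i, β i ∈ P.grade 1)
    (hξβ : ∀ i j, P.bracket (ξ i) (β j) = 0) (hββ : ∀ i j, P.bracket (β i) (β j) = 0) (a : I) :
    P.bracket (gaugeTerm ξ β) (β a) = 0 := by
  simp [gaugeTerm, P.leibniz _ (hξ _) (hβ _), hξβ, hββ]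

theorem bracket_gaugeTerm_xi (hc_anti : ∀ i j l, c i j l = -c j i l)
    (hξ : ∀ i, ξ i ∈ P.grade (-1)) (hβ : ∀ i, β i ∈ P.grade 1)
    (hξξ : ∀ i j, P.bracket (ξ i) (ξ j) = ∑ l, c i j l • ξ l)
    (hξβ : ∀ i j, P.bracket (ξ i) (β j) = 0) (j : I) :
    P.bracket (gaugeTerm ξ β) (ξ j) = ∑ i, ∑ l, c i j l • (ξ l * β i) := by
  rw [P.antisymm (P.gaugeTerm_mem hξ hβ) (hξ j)]
  simp [gaugeTerm, P.bracket_mul_right (hξ j) (hξ _) (hβ _), hξξ, hξβ, Finset.sum_mul,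
    hc_anti _ j]

theorem bracket_gaugeTerm_self (hc_anti : ∀ i j l, c i j l = -c j i l)
    (hξ : ∀ i, ξ i ∈ P.grade (-1)) (hβ : ∀ i, β i ∈ P.grade 1)
    (hξξ : ∀ i j, P.bracket (ξ i) (ξ j) = ∑ l, c i j l • ξ l)
    (hξβ : ∀ i j, P.bracket (ξ i) (β j) = 0) (hββ : ∀ i j, P.bracket (β i) (β j) = 0) :
    P.bracket (gaugeTerm ξ β) (gaugeTerm ξ β) = ∑ l, ξ l * ghostQuadratic c β l := by
  nth_rw 2 [gaugeTerm]
  simp only [map_sum, P.bracket_mul_right (P.gaugeTerm_mem hξ hβ) (hξ _) (hβ _),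
    P.bracket_gaugeTerm_xi hc_anti hξ hβ hξξ hξβ, P.bracket_gaugeTerm_beta hξ hβ hξβ hββ,
    mul_zero, smul_zero, add_zero, ghostQuadratic, Finset.sum_mul, Finset.mul_sum,
    smul_mul_assoc, mul_smul_comm, mul_assoc]
  rw [Finset.sum_comm_cycle]
  exact Fintype.sum_congr _ _ fun _ => Finset.sum_comm

variable [DecidableEq I]

theorem bracket_gaugeTerm_betaStar (hξ : ∀ i, ξ i ∈ P.grade (-1)) (hβ : ∀ i, β i ∈ P.grade 1)
    (hββs : ∀ i j, P.bracket (β i) (βs j) = if i = j then 1 else 0)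
    (hξβs : ∀ i j, P.bracket (ξ i) (βs j) = 0) (l : I) :
    P.bracket (gaugeTerm ξ β) (βs l) = ξ l := by
  simp [gaugeTerm, P.leibniz _ (hξ _) (hβ _), hββs, hξβs]

theorem bracket_gaugeTerm_ghostTerm (hξ : ∀ i, ξ i ∈ P.grade (-1)) (hβ : ∀ i, β i ∈ P.grade 1)
    (hβs : ∀ i, βs i ∈ P.grade (-2)) (hξβ : ∀ i j, P.bracket (ξ i) (β j) = 0)
    (hββ : ∀ i j, P.bracket (β i) (β j) = 0)
    (hββs : ∀ i j, P.bracket (β i) (βs j) = if i = j then 1 else 0)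
    (hξβs : ∀ i j, P.bracket (ξ i) (βs j) = 0) :
    P.bracket (gaugeTerm ξ β) (ghostTerm c β βs) = ∑ l, ξ l * ghostQuadratic c β l := by
  have hy := P.gaugeTerm_mem hξ hβ
  simp [ghostTerm, P.bracket_mul_right hy (hβs _) (P.ghostQuadratic_mem hβ _),
    P.bracket_gaugeTerm_betaStar hξ hβ hββs hξβs,
    P.bracket_ghostQuadratic_eq_zero hy hβ (P.bracket_gaugeTerm_beta hξ hβ hξβ hββ)]

theorem bracket_beta_ghostTerm (hβ : ∀ i, β i ∈ P.grade 1) (hβs : ∀ i, βs i ∈ P.grade (-2))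
    (hββ : ∀ i j, P.bracket (β i) (β j) = 0)
    (hββs : ∀ i j, P.bracket (β i) (βs j) = if i = j then 1 else 0) (a : I) :
    P.bracket (β a) (ghostTerm c β βs) = ghostQuadratic c β a := by
  simp [ghostTerm, P.bracket_mul_right (hβ a) (hβs _) (P.ghostQuadratic_mem hβ _), hββs,
    P.bracket_ghostQuadratic_eq_zero (hβ a) hβ (hββ a)]

theorem bracket_ghostTerm_beta (hβ : ∀ i, β i ∈ P.grade 1) (hβs : ∀ i, βs i ∈ P.grade (-2))
    (hββ : ∀ i j, P.bracket (β i) (β j) = 0)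
    (hββs : ∀ i j, P.bracket (β i) (βs j) = if i = j then 1 else 0) (a : I) :
    P.bracket (ghostTerm c β βs) (β a) = -ghostQuadratic c β a := by
  rw [P.antisymm (P.ghostTerm_mem hβ hβs) (hβ a), P.bracket_beta_ghostTerm hβ hβs hββ hββs]
  norm_num

theorem bracket_ghostTerm_ghostQuadratic [CharZero k] (hc_anti : ∀ i j l, c i j l = -c j i l)
    (hc_jac : ∀ i j l n, ∑ t, (c i j t * c t l n + c j l t * c t i n + c l i t * c t j n) = 0)
    (hβ : ∀ i, β i ∈ P.grade 1) (hβs : ∀ i, βs i ∈ P.grade (-2))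
    (hββ : ∀ i j, P.bracket (β i) (β j) = 0)
    (hββs : ∀ i j, P.bracket (β i) (βs j) = if i = j then 1 else 0) (l : I) :
    P.bracket (ghostTerm c β βs) (ghostQuadratic c β l) = 0 := by
  rw [ghostQuadratic]
  simp [P.bracket_mul_right (P.ghostTerm_mem hβ hβs) (hβ _) (hβ _),
    P.bracket_ghostTerm_beta hβ hβs hββ hββs, smul_add, Finset.sum_add_distrib,
    P.sum_smul_ghostQuadratic_mul_eq_zero hc_jac hβ,
    P.sum_smul_mul_ghostQuadratic_eq_zero hc_anti hc_jac hβ]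

theorem bracket_ghostQuadratic_betaStar (hc_anti : ∀ i j l, c i j l = -c j i l)
    (hβ : ∀ i, β i ∈ P.grade 1)
    (hββs : ∀ i j, P.bracket (β i) (βs j) = if i = j then 1 else 0) (n l : I) :
    P.bracket (ghostQuadratic c β n) (βs l) = (2 : k) • ∑ i, c i l n • β i := by
  simp [ghostQuadratic, P.leibniz _ (hβ _) (hβ _), hββs, Finset.sum_add_distrib, two_smul,
    Finset.sum_ite_irrel, hc_anti l _ n]

theorem bracket_ghostTerm_betaStar (hc_anti : ∀ i j l, c i j l = -c j i l)
    (hβ : ∀ i, β i ∈ P.grade 1) (hβs : ∀ i, βs i ∈ P.grade (-2))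
    (hββs : ∀ i j, P.bracket (β i) (βs j) = if i = j then 1 else 0)
    (hβsβs : ∀ i j, P.bracket (βs i) (βs j) = 0) (l : I) :
    P.bracket (ghostTerm c β βs) (βs l) = (2 : k) • ∑ n, ∑ i, c i l n • (βs n * β i) := by
  simp [ghostTerm, P.leibniz _ (hβs _) (P.ghostQuadratic_mem hβ _), hβsβs,
    P.bracket_ghostQuadratic_betaStar hc_anti hβ hββs, Finset.mul_sum, Finset.smul_sum]

theorem bracket_ghostTerm_self [CharZero k] (hc_anti : ∀ i j l, c i j l = -c j i l)
    (hc_jac : ∀ i j l n, ∑ t, (c i j t * c t l n + c j l t * c t i n + c l i t * c t j n) = 0)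
    (hβ : ∀ i, β i ∈ P.grade 1) (hβs : ∀ i, βs i ∈ P.grade (-2))
    (hββ : ∀ i j, P.bracket (β i) (β j) = 0)
    (hββs : ∀ i j, P.bracket (β i) (βs j) = if i = j then 1 else 0)
    (hβsβs : ∀ i j, P.bracket (βs i) (βs j) = 0) :
    P.bracket (ghostTerm c β βs) (ghostTerm c β βs) = 0 := by
  nth_rw 2 [ghostTerm]
  simp only [map_sum, P.bracket_mul_right (P.ghostTerm_mem hβ hβs) (hβs _)
      (P.ghostQuadratic_mem hβ _),
    P.bracket_ghostTerm_ghostQuadratic hc_anti hc_jac hβ hβs hββ hββs, mul_zero, smul_zero,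
    add_zero, P.bracket_ghostTerm_betaStar hc_anti hβ hβs hββs hβsβs, smul_mul_assoc,
    Finset.sum_mul, mul_assoc, ← Finset.smul_sum]
  rw [← Finset.sum_comm_cycle]
  refine smul_eq_zero_of_right _ (Finset.sum_eq_zero fun n _ => ?_)
  rw [← mul_zero (βs n), ← P.sum_smul_mul_ghostQuadratic_eq_zero hc_anti hc_jac hβ n]
  simp only [Finset.mul_sum, mul_smul_comm]

end P0Data

end FaddeevPopov

theorem faddeev_popov_master_equation_general {k O A : Type*} [Field k] [CharZero k]
    [CommRing O] [Algebra k O] [Ring A] [Algebra k A]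
    (P : P0Data k A) (m : ℕ)
    (c : Fin m → Fin m → Fin m → k)
    (hc_anti : ∀ i j l, c i j l = -c j i l)
    (hc_jac : ∀ i j l n, ∑ t, (c i j t * c t l n + c j l t * c t i n + c l i t * c t j n) = 0)
    (D : Fin m → Derivation k O O)
    (S₀ : O) (hinv : ∀ i, D i S₀ = 0)
    (ι : O →ₐ[k] A) (ξ β βs : Fin m → A)
    (hι : ∀ f : O, ι f ∈ P.grade 0)
    (hξ : ∀ i, ξ i ∈ P.grade (-1))
    (hβ : ∀ i, β i ∈ P.grade 1)
    (hβs : ∀ i, βs i ∈ P.grade (-2))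
    -- canonical bracket relations
    (hb_ff : ∀ f g : O, P.bracket (ι f) (ι g) = 0)
    (hb_fξ : ∀ (f : O) (i), P.bracket (ι f) (ξ i) = ι (D i f))
    (hb_ξξ : ∀ i j, P.bracket (ξ i) (ξ j) = ∑ l, c i j l • ξ l)
    (hb_ββs : ∀ i j, P.bracket (β i) (βs j) = if i = j then 1 else 0)
    (hb_fβ : ∀ (f : O) (i), P.bracket (ι f) (β i) = 0)
    (hb_fβs : ∀ (f : O) (i), P.bracket (ι f) (βs i) = 0)
    (hb_ξβ : ∀ i j, P.bracket (ξ i) (β j) = 0)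
    (hb_ξβs : ∀ i j, P.bracket (ξ i) (βs j) = 0)
    (hb_ββ : ∀ i j, P.bracket (β i) (β j) = 0)
    (hb_βsβs : ∀ i j, P.bracket (βs i) (βs j) = 0) :
    P.bracket
      (ι S₀ + ∑ i, ξ i * β i -
        (2 : k)⁻¹ • ∑ i, ∑ j, ∑ l, c i j l • (βs l * β i * β j))
      (ι S₀ + ∑ i, ξ i * β i -
        (2 : k)⁻¹ • ∑ i, ∑ j, ∑ l, c i j l • (βs l * β i * β j)) = 0 := by
  have hs := hι S₀
  have hy := P.gaugeTerm_mem hξ hβ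
  have hC := P.ghostTerm_mem (c := c) hβ hβs
  have hsξ : ∀ i, P.bracket (ι S₀) (ξ i) = 0 := fun i => by rw [hb_fξ, hinv, map_zero]
  change P.bracket (ι S₀ + gaugeTerm ξ β - _) (ι S₀ + gaugeTerm ξ β - _) = 0
  simp only [sum_smul_mul_mul_eq_ghostTerm, map_add, map_sub, map_smul, LinearMap.add_apply,
    LinearMap.sub_apply, LinearMap.smul_apply]
  rw [P.bracket_comm_of_mem_zero hy hs, P.bracket_comm_of_mem_zero hC hs,
    P.bracket_comm_of_mem_zero hC hy, hb_ff,
    P.bracket_gaugeTerm_eq_zero hs hξ hβ hsξ (hb_fβ S₀),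
    P.bracket_ghostTerm_eq_zero hs hβ hβs (hb_fβ S₀) (hb_fβs S₀),
    P.bracket_gaugeTerm_self hc_anti hξ hβ hb_ξξ hb_ξβ hb_ββ,
    P.bracket_gaugeTerm_ghostTerm hξ hβ hβs hb_ξβ hb_ββ hb_ββs hb_ξβs,
    P.bracket_ghostTerm_self hc_anti hc_jac hβ hβs hb_ββ hb_ββs hb_βsβs]
  module

/-- Faddeev–Popov action.  Let `g` be a finite dimensional Lie algebra
with basis `β₁*, …, β_m*` and structure constants `c`, acting by derivations `D i` on a
commutative algebra `O`, and let `S₀ ∈ O` be invariant.  In the `P₀`-algebra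
`A = Λ_O(Der O) ⊗ Sym(g) ⊗ Λ(g*)` (presented here by its generators `ι f`, `ξ i` of
degree -1, `β i` of degree 1, `βs i` of degree -2 and canonical bracket relations), the
Faddeev–Popov element `S = S₀ + Σ θᵢ βⁱ - ½ Σ c_{ij}^ℓ β_ℓ* βⁱ βʲ` satisfies `[S,S] = 0`. -/
theorem faddeev_popov_master_equation {k O A : Type*} [Field k] [CharZero k]
    [CommRing O] [Algebra k O] [Ring A] [Algebra k A]
    (P : P0Data k A) (m : ℕ)
    (c : Fin m → Fin m → Fin m → k)
    (hc_anti : ∀ i j l, c i j l = -c j i l)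
    (hc_jac : ∀ i j l n, ∑ t, (c i j t * c t l n + c j l t * c t i n + c l i t * c t j n) = 0)
    (D : Fin m → Derivation k O O)
    (hrep : ∀ i j, ⁅D i, D j⁆ = ∑ l, c i j l • D l)
    (S₀ : O) (hinv : ∀ i, D i S₀ = 0)
    (ι : O →ₐ[k] A) (ξ β βs : Fin m → A)
    (hι : ∀ f : O, ι f ∈ P.grade 0)
    (hξ : ∀ i, ξ i ∈ P.grade (-1))
    (hβ : ∀ i, β i ∈ P.grade 1)
    (hβs : ∀ i, βs i ∈ P.grade (-2))
    -- canonical bracket relations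
    (hb_ff : ∀ f g : O, P.bracket (ι f) (ι g) = 0)
    (hb_fξ : ∀ (f : O) (i), P.bracket (ι f) (ξ i) = ι (D i f))
    (hb_ξξ : ∀ i j, P.bracket (ξ i) (ξ j) = ∑ l, c i j l • ξ l)
    (hb_ββs : ∀ i j, P.bracket (β i) (βs j) = if i = j then 1 else 0)
    (hb_fβ : ∀ (f : O) (i), P.bracket (ι f) (β i) = 0)
    (hb_fβs : ∀ (f : O) (i), P.bracket (ι f) (βs i) = 0)
    (hb_ξβ : ∀ i j, P.bracket (ξ i) (β j) = 0)
    (hb_ξβs : ∀ i j, P.bracket (ξ i) (βs j) = 0)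
    (hb_ββ : ∀ i j, P.bracket (β i) (β j) = 0)
    (hb_βsβs : ∀ i j, P.bracket (βs i) (βs j) = 0) :
    P.bracket
      (ι S₀ + ∑ i, ξ i * β i -
        (2 : k)⁻¹ • ∑ i, ∑ j, ∑ l, c i j l • (βs l * β i * β j))
      (ι S₀ + ∑ i, ξ i * β i -
        (2 : k)⁻¹ • ∑ i, ∑ j, ∑ l, c i j l • (βs l * β i * β j)) = 0 :=
  faddeev_popov_master_equation_general P m c hc_anti hc_jac D S₀ hinv ι ξ β βs hι hξ hβ hβs hb_ff
    hb_fξ hb_ξξ hb_ββs hb_fβ hb_fβs hb_ξβ hb_ξβs hb_ββ hb_βsβs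
end

section
/- Let B be a graded commutative ring (over a field of characteristic 0), z an even variable of degree j ∈ 2ℤ and z* a variable of degree -j-1, and A = B[z,z*] = B[z] ⊕ B[z]z* with a P₀-bracket such that [z,z*] = 1 and [z,B] = 0 = [z*,B]. Then every degree-zero Poisson derivation D of A (a derivation of degree 0 for the product satisfying D[a,b] = [Da,b] + [a,Db]) agrees, on the generators z and z*, with a hamiltonian derivation [h,·] where h = G - z* f₀ ∈ A^{-1}, with D(z) = f₀ ∈ B[z], D(z*) = g₀ + z* g₁, g₁ = -[f₀, z*], and G = ∫ g₀ dz (formal antiderivative in z). Moreover D - [h,·] preserves B. -/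
namespace DirectSum

variable {ι R M N : Type*} [DecidableEq ι] [AddRightCancelSemigroup ι] [Semiring R]
  [AddCommMonoid M] [Module R M] [AddCommMonoid N] [Module R N]
  {ℳ : ι → Submodule R M} {𝒩 : ι → Submodule R N} [Decomposition ℳ] [Decomposition 𝒩]
  {L : M →ₗ[R] N} {c : ι}

theorem decompose_map_add (hL : ∀ i, ∀ x ∈ ℳ i, L x ∈ 𝒩 (i + c)) (x : M) (i : ι) :
    (decompose 𝒩 (L x) (i + c) : N) = L (decompose ℳ x i) := by
  induction x using Decomposition.inductionOn ℳ with
  | zero => simp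
  | @homogeneous i' x =>
    by_cases h : i' = i
    · subst h
      rw [decompose_of_mem_same _ (hL _ _ x.2), decompose_coe, of_eq_same]
    · rw [decompose_of_mem_ne _ (hL _ _ x.2) (fun h' => h (add_right_cancel h')),
        decompose_coe, of_eq_of_ne _ _ _ (Ne.symm h), Submodule.coe_zero, map_zero]
  | add x x' hx hx' => simp [hx, hx']

theorem map_decompose_eq_of_map_eq (hL : ∀ i, ∀ x ∈ ℳ i, L x ∈ 𝒩 (i + c)) {x : M} {y : N}
    {i : ι} (hxy : L x = y) (hy : y ∈ 𝒩 (i + c)) : L (decompose ℳ x i) = y := by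
  rw [← decompose_map_add hL, hxy, decompose_of_mem_same _ hy]

theorem map_eq_zero_iff_forall_map_decompose_eq_zero
    (hL : ∀ i, ∀ x ∈ ℳ i, L x ∈ 𝒩 (i + c)) {x : M} :
    L x = 0 ↔ ∀ i, L (decompose ℳ x i) = 0 := by
  classical
  refine ⟨fun hx i => map_decompose_eq_of_map_eq hL hx (zero_mem _), fun h => ?_⟩
  rw [← sum_support_decompose ℳ x, map_sum]
  exact Finset.sum_eq_zero fun i _ => h i

end DirectSum

namespace P0Data

open DirectSum

variable {k A : Type*} [Field k] [Ring A] [Algebra k A] (P : P0Data k A)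

noncomputable instance : Decomposition P.grade := P.internal.chooseDecomposition

variable {P} {r s t : ℤ} {a b c x y : A}

theorem bracket_mapsTo_grade (hy : y ∈ P.grade t) :
    ∀ i, ∀ x ∈ P.grade i, P.bracket y x ∈ P.grade (i + (t + 1)) := fun i _ hx => by
  simpa only [add_comm i, add_assoc] using P.bracket_mem hy hx

theorem bracket_flip_mapsTo_grade (hy : y ∈ P.grade t) :
    ∀ i, ∀ x ∈ P.grade i, P.bracket.flip y x ∈ P.grade (i + (t + 1)) := fun i _ hx => by
  simpa only [add_assoc, LinearMap.flip_apply] using P.bracket_mem hx hy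

theorem bracket_eq_neg_of_even (ha : a ∈ P.grade r) (hb : b ∈ P.grade s)
    (h : Even ((r - 1) * (s - 1))) : P.bracket a b = -P.bracket b a := by
  rw [P.antisymm ha hb, h.neg_one_zpow, one_smul]

theorem bracket_eq_of_odd (ha : a ∈ P.grade r) (hb : b ∈ P.grade s)
    (h : Odd ((r - 1) * (s - 1))) : P.bracket a b = P.bracket b a := by
  rw [P.antisymm ha hb, h.neg_one_zpow, neg_one_smul, neg_neg]

theorem bracket_mul_of_even (ha : a ∈ P.grade r) (hb : b ∈ P.grade s) (h : Even (r * s))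
    (c : A) : P.bracket (a * b) c = a * P.bracket b c + b * P.bracket a c := by
  rw [P.leibniz c ha hb, h.neg_one_zpow, one_smul]

variable (P) in
theorem bracket_one_left (c : A) : P.bracket 1 c = 0 := by
  simpa using P.leibniz c P.one_mem P.one_mem

theorem bracket_eq_zero_comm (hy : y ∈ P.grade t) :
    P.bracket x y = 0 ↔ P.bracket y x = 0 := by
  rw [← LinearMap.flip_apply (m := x),
    map_eq_zero_iff_forall_map_decompose_eq_zero (bracket_flip_mapsTo_grade hy),
    map_eq_zero_iff_forall_map_decompose_eq_zero (bracket_mapsTo_grade hy)]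
  refine forall_congr' fun i => ?_
  rw [LinearMap.flip_apply, P.antisymm (decompose P.grade x i).2 hy, neg_eq_zero,
    smul_eq_zero_iff_right (zpow_ne_zero _ (neg_ne_zero.2 one_ne_zero))]

theorem bracket_mul_of_bracket_eq_zero (hc : c ∈ P.grade t) (ha : P.bracket a c = 0) (b : A) :
    P.bracket (a * b) c = a * P.bracket b c := by
  classical
  have hai : ∀ i, P.bracket (decompose P.grade a i) c = 0 :=
    (map_eq_zero_iff_forall_map_decompose_eq_zero (bracket_flip_mapsTo_grade hc)).1 ha
  induction b using Decomposition.inductionOn P.grade with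
  | zero => simp
  | homogeneous b =>
    rw [← sum_support_decompose P.grade a, Finset.sum_mul, Finset.sum_mul, map_sum,
      LinearMap.sum_apply]
    refine Finset.sum_congr rfl fun i _ => ?_
    rw [P.leibniz c (decompose P.grade a i).2 b.2, hai i, mul_zero, smul_zero, add_zero]
  | add b b' hb hb' => simp [mul_add, hb, hb']

def commutant (hc : c ∈ P.grade t) : Subalgebra k A where
  carrier := {x | P.bracket x c = 0}
  mul_mem' {a b} (ha : P.bracket a c = 0) (hb : P.bracket b c = 0) :=
    show P.bracket (a * b) c = 0 by rw [bracket_mul_of_bracket_eq_zero hc ha, hb, mul_zero]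
  add_mem' {a b} (ha : P.bracket a c = 0) (hb : P.bracket b c = 0) :=
    show P.bracket (a + b) c = 0 by rw [map_add, LinearMap.add_apply, ha, hb, add_zero]
  algebraMap_mem' μ := by
    simp [Algebra.algebraMap_eq_smul_one, bracket_one_left]

@[simp]
theorem mem_commutant (hc : c ∈ P.grade t) : x ∈ commutant hc ↔ P.bracket x c = 0 := Iff.rfl

theorem bracket_bracket_eq_zero (ha : a ∈ P.grade r) (hb : b ∈ P.grade s) (hc : c ∈ P.grade t)
    (hac : P.bracket a c = 0) (hbca : P.bracket (P.bracket b c) a = 0) :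
    P.bracket (P.bracket a b) c = 0 := by
  have hJ := P.jacobi ha hb hc
  rw [hbca, (bracket_eq_zero_comm hc).1 hac, map_zero, LinearMap.zero_apply, smul_zero,
    smul_zero, add_zero, add_zero] at hJ
  exact (smul_eq_zero_iff_right (zpow_ne_zero _ (neg_ne_zero.2 one_ne_zero))).1 hJ

variable (P) in
def IsPoissonDerivation (D : A →ₗ[k] A) : Prop :=
  ∀ a b, D (P.bracket a b) = P.bracket (D a) b + P.bracket a (D b)

theorem bracket_bracket_of_mem_grade_neg_one {h : A} (hh : h ∈ P.grade (-1))
    (ha : a ∈ P.grade s) (hc : c ∈ P.grade t) :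
    P.bracket h (P.bracket a c) = P.bracket (P.bracket h a) c + P.bracket a (P.bracket h c) := by
  have h2 : Even (-1 - 1 : ℤ) := ⟨-1, by norm_num⟩
  have hach : P.bracket (P.bracket a c) h = -P.bracket h (P.bracket a c) :=
    bracket_eq_neg_of_even (P.bracket_mem ha hc) hh (h2.mul_left _)
  have hch : P.bracket c h = -P.bracket h c := bracket_eq_neg_of_even hc hh (h2.mul_left _)
  have hhca : ((-1 : k) ^ ((t - 1) * (s - 1))) • P.bracket (P.bracket h c) a =
      -P.bracket a (P.bracket h c) := by
    rw [P.antisymm (P.bracket_mem hh hc) ha, show -1 + t + 1 - 1 = t - 1 by ring, smul_neg,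
      smul_smul, ← mul_zpow, neg_one_mul, neg_neg, one_zpow, one_smul]
  have hJ := P.jacobi hh ha hc
  rw [(h2.mul_right _).neg_one_zpow, (h2.mul_left _).neg_one_zpow, one_smul, one_smul, hach,
    hch, map_neg, LinearMap.neg_apply, smul_neg, hhca] at hJ
  rw [eq_comm, ← sub_eq_zero, ← hJ]
  abel

theorem isPoissonDerivation_bracket {h : A} (hh : h ∈ P.grade (-1)) :
    P.IsPoissonDerivation (P.bracket h) := by
  intro a c
  induction a using Decomposition.inductionOn P.grade with
  | zero => simp
  | add a a' ha ha' => simp only [map_add, LinearMap.add_apply, ha, ha']; abel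
  | homogeneous a =>
    induction c using Decomposition.inductionOn P.grade with
    | zero => simp
    | add c c' hc hc' => simp only [map_add, hc, hc']; abel
    | homogeneous c => exact bracket_bracket_of_mem_grade_neg_one hh a.2 c.2

theorem IsPoissonDerivation.sub {D E : A →ₗ[k] A} (hD : P.IsPoissonDerivation D)
    (hE : P.IsPoissonDerivation E) : P.IsPoissonDerivation (D - E) := by
  intro a b
  simp only [LinearMap.sub_apply, hD a b, hE a b, map_sub, LinearMap.sub_apply]
  abel

theorem IsPoissonDerivation.bracket_map_eq_zero {D : A →ₗ[k] A} (hD : P.IsPoissonDerivation D)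
    (hDc : D c = 0) (hbc : P.bracket b c = 0) : P.bracket (D b) c = 0 := by
  simpa [hbc, hDc] using (hD b c).symm

theorem IsPoissonDerivation.bracket_map_self_eq_zero [NeZero (2 : k)] {D : A →ₗ[k] A}
    (hD : P.IsPoissonDerivation D) (ha : a ∈ P.grade r) (hr : Even r) (hDa : D a ∈ P.grade r)
    (haa : P.bracket a a = 0) : P.bracket (D a) a = 0 := by
  have h := hD a a
  rw [haa, map_zero, bracket_eq_of_odd ha hDa ((hr.sub_odd odd_one).mul (hr.sub_odd odd_one)),
    ← two_smul k] at h
  exact (smul_eq_zero.1 h.symm).resolve_left two_ne_zero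

section CanonicalPair

variable {j : ℤ} {z zs : A}

theorem bracket_mul_eq_neg (hz : z ∈ P.grade j) (hzsz : P.bracket zs z = -1)
    (ha : P.bracket a z = 0) : P.bracket (a * zs) z = -a := by
  rw [bracket_mul_of_bracket_eq_zero hz ha, hzsz, mul_neg_one]

theorem mem_of_bracket_eq_zero {S : Subalgebra k A} (hz : z ∈ P.grade j)
    (hS : S ≤ commutant hz) (hzsz : P.bracket zs z = -1)
    (hdec : ∀ a, ∃ p ∈ S, ∃ q ∈ S, a = p + q * zs) (hx : P.bracket x z = 0) : x ∈ S := by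
  obtain ⟨p, hp, q, hq, rfl⟩ := hdec x
  have hq0 : q = 0 := by
    simpa [(mem_commutant hz).1 (hS hp),
      bracket_mul_eq_neg hz hzsz ((mem_commutant hz).1 (hS hq))] using hx
  simpa [hq0] using hp

theorem adjoin_insert_le_commutant {B : Subalgebra k A} (hz : z ∈ P.grade j)
    (hzz : P.bracket z z = 0) (hzB : ∀ b ∈ B, P.bracket z b = 0) :
    Algebra.adjoin k (insert z (B : Set A)) ≤ commutant hz :=
  Algebra.adjoin_le <| Set.insert_subset hzz fun b hb => (bracket_eq_zero_comm hz).2 (hzB b hb)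

theorem IsPoissonDerivation.bracket_add_mul_bracket_eq_zero {D : A →ₗ[k] A}
    (hD : P.IsPoissonDerivation D) (hD1 : D 1 = 0) (hz : z ∈ P.grade j) (hj : Even j)
    (hzs : zs ∈ P.grade (-j - 1)) (hDz : D z ∈ P.grade j) (hDzs : D zs ∈ P.grade (-j - 1))
    (hzzs : P.bracket z zs = 1) (hzsz : P.bracket zs z = -1)
    (hwz : P.bracket (P.bracket (D z) zs) z = 0) :
    P.bracket (D zs + zs * P.bracket (D z) zs) z = 0 := by
  have h := hD z zs
  rw [hzzs, hD1, bracket_eq_neg_of_even hz hDzs (by simp [parity_simps, hj])] at h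
  have hw0 : P.bracket (D z) zs ∈ P.grade 0 := by
    convert P.bracket_mem hDz hzs using 2; ring
  rw [map_add, LinearMap.add_apply, bracket_mul_of_even hzs hw0 (by simp), hwz, hzsz, mul_zero,
    zero_add, mul_neg_one, ← add_neg_eq_zero.1 h.symm, add_neg_cancel]

theorem exists_mem_grade_bracket_eq {g G₀ : A} (hz : z ∈ P.grade r) (hzs : zs ∈ P.grade t)
    {i : ℤ} (hg : g ∈ P.grade (i + (t + 1))) (hG₀zs : P.bracket G₀ zs = g)
    (hG₀z : P.bracket G₀ z = 0) :
    ∃ G ∈ P.grade i, P.bracket G zs = g ∧ P.bracket G z = 0 :=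
  ⟨_, (decompose P.grade G₀ i).2,
    map_decompose_eq_of_map_eq (bracket_flip_mapsTo_grade hzs) hG₀zs hg,
    (map_eq_zero_iff_forall_map_decompose_eq_zero (bracket_flip_mapsTo_grade hz)).1 hG₀z i⟩

theorem IsPoissonDerivation.mem_of_map_eq_zero {D : A →ₗ[k] A} {B : Set A}
    (hD : P.IsPoissonDerivation D) (hz : z ∈ P.grade r) (hzs : zs ∈ P.grade t)
    (hDz : D z = 0) (hDzs : D zs = 0) (hzB : ∀ b ∈ B, P.bracket z b = 0)
    (hzsB : ∀ b ∈ B, P.bracket zs b = 0)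
    (hB : ∀ x, P.bracket x z = 0 → P.bracket x zs = 0 → x ∈ B) (hb : b ∈ B) : D b ∈ B :=
  hB _ (hD.bracket_map_eq_zero hDz ((bracket_eq_zero_comm hz).2 (hzB b hb)))
    (hD.bracket_map_eq_zero hDzs ((bracket_eq_zero_comm hzs).2 (hzsB b hb)))

theorem bracket_sub_mul_eq_of_bracket_eq_neg_one {f G : A} (hj : Even j)
    (hzs : zs ∈ P.grade (-j - 1)) (hzsz : P.bracket zs z = -1) (hf : f ∈ P.grade j)
    (hfz : P.bracket f z = 0) (hGz : P.bracket G z = 0) : P.bracket (G - zs * f) z = f := by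
  rw [map_sub, LinearMap.sub_apply, bracket_mul_of_even hzs hf (hj.mul_left _), hfz, hzsz, hGz]
  simp

theorem bracket_sub_mul_eq_sub {f G : A} (hj : Even j) (hzs : zs ∈ P.grade (-j - 1))
    (hzszs : P.bracket zs zs = 0) (hf : f ∈ P.grade j) :
    P.bracket (G - zs * f) zs = P.bracket G zs - zs * P.bracket f zs := by
  rw [map_sub, LinearMap.sub_apply, bracket_mul_of_even hzs hf (hj.mul_left _), hzszs, mul_zero,
    add_zero]

end CanonicalPair

end P0Data

open P0Data

/-- Let `A = B[z, z*]` with `z` even of degree `j`, `z*` of degree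
`-j-1`, a `P₀`-bracket with `[z,z*] = 1`, `[z,B] = 0 = [z*,B]`, and
`A = B[z] ⊕ B[z]·z*`.  Then every degree-zero Poisson derivation `D` of `A` agrees on the
generators `z, z*` with the hamiltonian derivation `[h, ·]`, `h = G - z*·f₀` where
`D z = f₀ ∈ B[z]`, `D z* = g₀ + z*·g₁` with `g₀, g₁ ∈ B[z]` and `G = ∫ g₀ dz` (i.e.
`[G, z*] = g₀`); moreover `D - [h, ·]` preserves `B`. -/
theorem poisson_derivation_one_dimensional {k A : Type*} [Field k] [CharZero k]
    [Ring A] [Algebra k A] (P : P0Data k A)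
    (j : ℤ) (hj : Even j) (z zs : A)
    (hz : z ∈ P.grade j) (hzs : zs ∈ P.grade (-j - 1))
    (B : Subalgebra k A) :
    let Bz : Subalgebra k A := Algebra.adjoin k (insert z (B : Set A))
    ∀ (_ : P.bracket z zs = 1)
      (_ : P.bracket z z = 0) (_ : P.bracket zs zs = 0)
      (_ : ∀ b ∈ B, P.bracket z b = 0) (_ : ∀ b ∈ B, P.bracket zs b = 0)
      -- A = B[z] ⊕ B[z]·z*
      (_ : ∀ a : A, ∃ p ∈ Bz, ∃ q ∈ Bz, a = p + q * zs)
      (_ : ∀ p ∈ Bz, ∀ q ∈ Bz, p + q * zs = 0 → p = 0 ∧ q = 0)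
      -- formal antiderivative in z exists in B[z]
      (_ : ∀ g ∈ Bz, ∃ G ∈ Bz, P.bracket G zs = g)
      -- B is the subalgebra of elements Poisson-commuting with z and z*
      (_ : ∀ x : A, P.bracket x z = 0 → P.bracket x zs = 0 → x ∈ B)
      -- D is a Poisson derivation of degree zero
      (D : A →ₗ[k] A)
      (_ : ∀ a b : A, D (a * b) = D a * b + a * D b)
      (_ : ∀ a b : A, D (P.bracket a b) = P.bracket (D a) b + P.bracket a (D b))
      (_ : ∀ (i : ℤ), ∀ x ∈ P.grade i, D x ∈ P.grade i),
      ∃ f₀ g₀ g₁ G : A, f₀ ∈ Bz ∧ g₀ ∈ Bz ∧ g₁ ∈ Bz ∧ G ∈ Bz ∧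
        D z = f₀ ∧ D zs = g₀ + zs * g₁ ∧ P.bracket G zs = g₀ ∧
        D z = P.bracket (G - zs * f₀) z ∧
        D zs = P.bracket (G - zs * f₀) zs ∧
        ∀ b ∈ B, D b - P.bracket (G - zs * f₀) b ∈ B := by
  intro Bz hzzs hzz hzszs hzB hzsB hdec _ hanti hB D hDmul hDbr hDdeg
  have hD : P.IsPoissonDerivation D := hDbr
  have hzsz : P.bracket zs z = -1 := by
    rw [bracket_eq_neg_of_even hzs hz (by simp [parity_simps, hj]), hzzs]
  have hBz : ∀ x, x ∈ Bz ↔ P.bracket x z = 0 := fun x =>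
    ⟨fun hx => adjoin_insert_le_commutant hz hzz hzB hx,
      mem_of_bracket_eq_zero hz (adjoin_insert_le_commutant hz hzz hzB) hzsz hdec⟩
  have hDz : D z ∈ P.grade j := hDdeg j z hz
  have hDzs : D zs ∈ P.grade (-j - 1) := hDdeg _ zs hzs
  have hf₀ : D z ∈ Bz := (hBz _).2 (hD.bracket_map_self_eq_zero hz hj hDz hzz)
  set w := P.bracket (D z) zs
  have hw : w ∈ Bz := (hBz w).2 <| bracket_bracket_eq_zero hDz hzs hz ((hBz _).1 hf₀) <| by
    rw [hzsz, map_neg, LinearMap.neg_apply, bracket_one_left, neg_zero]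
  set g₀ := D zs + zs * w with hg₀_def
  have hg₀ : g₀ ∈ Bz := (hBz g₀).2 <| hD.bracket_add_mul_bracket_eq_zero
    (by simpa using hDmul 1 1) hz hj hzs hDz hDzs hzzs hzsz ((hBz w).1 hw)
  have hw0 : w ∈ P.grade 0 := by convert P.bracket_mem hDz hzs using 2; ring
  have hg₀deg : g₀ ∈ P.grade (-j - 1) := add_mem hDzs (by simpa using P.mul_mem hzs hw0)
  obtain ⟨G₀, hG₀, hG₀g₀⟩ := hanti g₀ hg₀
  obtain ⟨G, hG, hGg₀, hGz⟩ := exists_mem_grade_bracket_eq (i := -1) hz hzs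
    (by convert hg₀deg using 2; ring) hG₀g₀ ((hBz G₀).1 hG₀)
  have hh : G - zs * D z ∈ P.grade (-1) :=
    sub_mem hG (by convert P.mul_mem hzs hDz using 2; ring)
  have hhz : P.bracket (G - zs * D z) z = D z :=
    bracket_sub_mul_eq_of_bracket_eq_neg_one hj hzs hzsz hDz ((hBz _).1 hf₀) hGz
  have hhzs : P.bracket (G - zs * D z) zs = D zs := by
    rw [bracket_sub_mul_eq_sub hj hzs hzszs hDz, hGg₀, hg₀_def, add_sub_cancel_right]
  refine ⟨D z, g₀, -w, G, hf₀, hg₀, neg_mem hw, (hBz G).2 hGz, rfl,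
    by rw [mul_neg, add_neg_cancel_right], hGg₀, hhz.symm, hhzs.symm, fun b hb => ?_⟩
  exact (hD.sub (isPoissonDerivation_bracket hh)).mem_of_map_eq_zero (B := B) hz hzs
    (sub_eq_zero.2 hhz.symm) (sub_eq_zero.2 hhzs.symm) hzB hzsB hB hb
end

section
/- Let X be a smooth manifold or nonsingular variety with de Rham complex (Ω•, d), and let A = Sym_{Ω•}(Der(Ω•)[1]) with differential d_S = [d, ·] (the graded commutator with the de Rham differential acting on the symmetric algebra of shifted derivations as a Hamiltonian vector field). Suppose locally Der(Ω•) is a free Ω•-module with basis the contractions ι_j and Lie derivatives L_j = [d, ι_j] for commuting vector fields ∂_j trivializing the tangent bundle. Then the Ω•-linear derivation h of A with h(L_j) = ι_j, h(ι_j) = 0 satisfies d_S∘h + h∘d_S = m·id on Symᵐ_{Ω•}(Der(Ω•)[1]); hence H := ⊕_{m>0} (1/m)h is a contracting homotopy showing that the inclusion Ω• → A of scalars is a quasi-isomorphism. -/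
/-!
The anticommutator `P = d_S ∘ h + h ∘ d_S` of the two odd derivations `d_S` and `h` is an even
derivation. It vanishes on `Ω• = Sym⁰`, hence is `Ω•`-linear, and it fixes the generators `ι_j`
and `L_j`; so `P` is the Euler operator of the polynomial grading, acting on `Symᵐ` as `m`.
Since `d_S` preserves the polynomial grading, every component `x_m` of a cocycle is a cocycle,
and for `m > 0` it is the boundary of `(1/m) h x_m`. An element of `Sym⁰` which is a boundary
is the boundary of the weight-zero component of any of its primitives.
-/

section OddDerivation

variable {k A : Type*} [Field k] [Ring A] [Algebra k A]

structure IsOddDerivation (grade : ℤ → Submodule k A) (e : ℤ) (D : A →ₗ[k] A) : Prop where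
  odd : Odd e
  map_mem : ∀ (i : ℤ), ∀ x ∈ grade i, D x ∈ grade (i + e)
  map_mul : ∀ (i : ℤ) (x y : A), x ∈ grade i → D (x * y) = D x * y + ((-1 : k) ^ i) • (x * D y)

theorem neg_one_zpow_add_of_odd {e : ℤ} (he : Odd e) (i : ℤ) :
    (-1 : k) ^ (i + e) = -(-1 : k) ^ i := by
  rw [zpow_add₀ (neg_ne_zero.2 one_ne_zero), he.neg_one_zpow, mul_neg_one]

theorem IsOddDerivation.anticommutator_mul {grade : ℤ → Submodule k A} {e f : ℤ}
    {d h : A →ₗ[k] A} (hd : IsOddDerivation grade e d) (hh : IsOddDerivation grade f h)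
    {i : ℤ} {x : A} (hx : x ∈ grade i) (y : A) :
    (d ∘ₗ h + h ∘ₗ d) (x * y) = (d ∘ₗ h + h ∘ₗ d) x * y + x * (d ∘ₗ h + h ∘ₗ d) y := by
  have hsq : (-1 : k) ^ i * (-1 : k) ^ i = 1 := by
    rw [← mul_zpow, neg_one_mul, neg_neg, one_zpow]
  simp only [LinearMap.add_apply, LinearMap.comp_apply]
  rw [hh.map_mul i x y hx, hd.map_mul i x y hx, map_add, map_add, map_smul, map_smul,
    hd.map_mul _ (h x) y (hh.map_mem i x hx), hh.map_mul _ (d x) y (hd.map_mem i x hx),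
    hd.map_mul i x (h y) hx, hh.map_mul i x (d y) hx,
    neg_one_zpow_add_of_odd hh.odd, neg_one_zpow_add_of_odd hd.odd]
  simp only [smul_add, smul_smul, hsq, one_smul, neg_smul, add_mul, mul_add]
  abel

end OddDerivation

section Weight

variable {k A : Type*} [CommRing k] [Ring A] [Algebra k A]

theorem LinearMap.map_mul_eq_mul_of_mem_span {P : A →ₗ[k] A} {S : Set A}
    (hP_mul : ∀ x ∈ S, ∀ y, P (x * y) = P x * y + x * P y) (hP_zero : ∀ x ∈ S, P x = 0)
    {a : A} (ha : a ∈ Submodule.span k S) (y : A) : P (a * y) = a * P y := by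
  induction ha using Submodule.span_induction with
  | mem x hx => rw [hP_mul x hx, hP_zero x hx, zero_mul, zero_add]
  | zero => simp
  | add u v _ _ hu hv => rw [add_mul, map_add, hu, hv, add_mul]
  | smul r u _ hu => rw [smul_mul_assoc, map_smul, hu, smul_mul_assoc]

theorem LinearMap.apply_eq_natCast_smul_of_mem {P : A →ₗ[k] A} {Sym : ℕ → Submodule k A}
    {G : Set A} (hP_zero : ∀ a ∈ Sym 0, P a = 0)
    (hP_mul_zero : ∀ a ∈ Sym 0, ∀ y, P (a * y) = a * P y)
    (hP_gen : ∀ g ∈ G, ∀ y, P (g * y) = g * y + g * P y)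
    (hSym_one : ∀ x ∈ Sym 1, x ∈ AddSubmonoid.closure {z | ∃ a ∈ Sym 0, ∃ g ∈ G, z = a * g})
    (hSym_succ : ∀ m : ℕ, (Sym (m + 1) : Set A) ⊆
      Submodule.span k {z | ∃ x ∈ Sym 1, ∃ y ∈ Sym m, z = x * y}) :
    ∀ m : ℕ, ∀ x ∈ Sym m, P x = (m : k) • x := by
  intro m
  induction m with
  | zero => intro x hx; rw [hP_zero x hx, Nat.cast_zero, zero_smul]
  | succ m ih =>
    intro x hx
    replace hx := hSym_succ m hx
    induction hx using Submodule.span_induction with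
    | mem z hz =>
      obtain ⟨u, hu, y, hy, rfl⟩ := hz
      replace hu := hSym_one u hu
      induction hu using AddSubmonoid.closure_induction with
      | mem z hz =>
        obtain ⟨a, ha, g, hg, rfl⟩ := hz
        rw [mul_assoc, hP_mul_zero a ha, hP_gen g hg, ih y hy]
        simp only [mul_add, mul_smul_comm]
        push_cast
        module
      | zero => simp
      | add v w _ _ hv hw => rw [add_mul, map_add, hv, hw, smul_add]
    | zero => simp
    | add v w _ _ hv hw => rw [map_add, hv, hw, smul_add]
    | smul r v _ hv => rw [map_smul, hv, smul_comm]

end Weight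

namespace DirectSum

theorem decompose_apply_of_mapsTo {ι M N σ τ F : Type*} [DecidableEq ι]
    [AddCommMonoid M] [AddCommMonoid N] [SetLike σ M] [AddSubmonoidClass σ M]
    [SetLike τ N] [AddSubmonoidClass τ N] {ℳ : ι → σ} {𝒩 : ι → τ}
    [Decomposition ℳ] [Decomposition 𝒩] [FunLike F M N] [AddMonoidHomClass F M N] {f : F}
    (hf : ∀ i, ∀ x ∈ ℳ i, f x ∈ 𝒩 i) (x : M) (i : ι) :
    (decompose 𝒩 (f x) i : N) = f (decompose ℳ x i) := by
  induction x using Decomposition.inductionOn ℳ with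
  | zero => simp
  | @homogeneous j x =>
    by_cases hji : j = i
    · subst hji
      rw [decompose_of_mem_same _ (hf j x x.2), decompose_coe, of_eq_same]
    · rw [decompose_of_mem_ne _ (hf j x x.2) hji, decompose_of_mem_ne _ x.2 hji, map_zero]
  | add x y hx hy => simp only [map_add, decompose_add, add_apply, AddMemClass.coe_add, hx, hy]

theorem eq_apply_decompose_of_mem {ι M σ F : Type*} [DecidableEq ι]
    [AddCommMonoid M] [SetLike σ M] [AddSubmonoidClass σ M] {ℳ : ι → σ}
    [Decomposition ℳ] [FunLike F M M] [AddMonoidHomClass F M M] {f : F}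
    (hf : ∀ i, ∀ x ∈ ℳ i, f x ∈ ℳ i) {i : ι} {ω y : M} (hω : ω ∈ ℳ i) (hy : ω = f y) :
    ω = f (decompose ℳ y i) := by
  rw [← decompose_apply_of_mapsTo hf, ← hy, decompose_of_mem_same _ hω]

theorem exists_eq_decompose_zero_add_of_homotopy {k M : Type*} [Field k] [CharZero k]
    [AddCommGroup M] [Module k M] {Sym : ℕ → Submodule k M} [Decomposition Sym]
    {d h : M →ₗ[k] M} (hd : ∀ m, ∀ x ∈ Sym m, d x ∈ Sym m)
    (hdh : ∀ m : ℕ, ∀ x ∈ Sym m, d (h x) + h (d x) = (m : k) • x) {x : M} (hx : d x = 0) :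
    ∃ y, x = decompose Sym x 0 + d y := by
  classical
  set s := (decompose Sym x).support
  have hcocycle (m : ℕ) : d (decompose Sym x m) = 0 := by
    rw [← decompose_apply_of_mapsTo hd, hx, decompose_zero, zero_apply, ZeroMemClass.coe_zero]
  have hexact (m : ℕ) (hm : m ≠ 0) :
      d ((m : k)⁻¹ • h (decompose Sym x m)) = decompose Sym x m := by
    have hdhx := hdh m _ (decompose Sym x m).2
    rw [hcocycle, map_zero, add_zero] at hdhx
    rw [map_smul, hdhx, smul_smul, inv_mul_cancel₀ (Nat.cast_ne_zero.2 hm), one_smul]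
  refine ⟨∑ m ∈ s.erase 0, (m : k)⁻¹ • h (decompose Sym x m), ?_⟩
  rw [map_sum, Finset.sum_congr rfl fun m hm => hexact m (Finset.ne_of_mem_erase hm)]
  conv_lhs => rw [← sum_support_decompose Sym x]
  by_cases h0 : 0 ∈ s
  · exact (Finset.add_sum_erase s _ h0).symm
  · rw [Finset.erase_eq_of_notMem h0, DFinsupp.notMem_support_iff.mp h0, ZeroMemClass.coe_zero,
      zero_add]

end DirectSum

open DirectSum

theorem deRham_BV_contraction_general {k A : Type*} [Field k] [CharZero k]
    [Ring A] [Algebra k A]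
    (grade : ℤ → Submodule k A) (Sym : ℕ → Submodule k A)
    (hSym_internal : DirectSum.IsInternal Sym)
    -- each Sym-component is spanned by grade-homogeneous elements
    (hcompat : ∀ m : ℕ, (Sym m : Set A) ⊆
      (Submodule.span k {x : A | x ∈ Sym m ∧ ∃ i : ℤ, x ∈ grade i} : Set A))
    (n : ℕ) (iota L : Fin n → A)
    (hiota_deg : ∀ j, iota j ∈ grade (-2)) (hL_deg : ∀ j, L j ∈ grade (-1))
    -- Der(Ω•)[1] is freely generated over Ω• = Sym⁰ by the ι_j and L_j
    (hgen : ∀ x ∈ Sym 1, ∃ a b : Fin n → A,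
      (∀ j, a j ∈ Sym 0 ∧ b j ∈ Sym 0) ∧ x = ∑ j, (a j * iota j + b j * L j))
    (hSym_gen : ∀ m : ℕ, (Sym (m + 1) : Set A) ⊆
      (Submodule.span k {z : A | ∃ x ∈ Sym 1, ∃ y ∈ Sym m, z = x * y} : Set A))
    (dS h : A →ₗ[k] A)
    (hdS_deg : ∀ (i : ℤ), ∀ x ∈ grade i, dS x ∈ grade (i + 1))
    (hh_deg : ∀ (i : ℤ), ∀ x ∈ grade i, h x ∈ grade (i - 1))
    (hdS_sym : ∀ (m : ℕ), ∀ x ∈ Sym m, dS x ∈ Sym m)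
    (hdS_leib : ∀ (i : ℤ) (x y : A), x ∈ grade i →
      dS (x * y) = dS x * y + ((-1 : k) ^ i) • (x * dS y))
    (hh_leib : ∀ (i : ℤ) (x y : A), x ∈ grade i →
      h (x * y) = h x * y + ((-1 : k) ^ i) • (x * h y))
    (hh_L : ∀ j, h (L j) = iota j) (hh_iota : ∀ j, h (iota j) = 0)
    (hh_sym0 : ∀ x ∈ Sym 0, h x = 0)
    (hdS_iota : ∀ j, dS (iota j) = L j) (hdS_L : ∀ j, dS (L j) = 0) :
    -- the homotopy identity on Symᵐ
    (∀ m : ℕ, ∀ x ∈ Sym m, dS (h x) + h (dS x) = (m : k) • x) ∧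
    -- the inclusion Ω• = Sym⁰ → A is a quasi-isomorphism
    (∀ x : A, dS x = 0 → ∃ ω ∈ Sym 0, ∃ y : A, x = ω + dS y) ∧
    (∀ ω ∈ Sym 0, (∃ y : A, ω = dS y) → ∃ η ∈ Sym 0, ω = dS η) := by
  classical
  let _ := hSym_internal.chooseDecomposition
  have hd : IsOddDerivation grade 1 dS := ⟨odd_one, hdS_deg, hdS_leib⟩
  have hh : IsOddDerivation grade (-1) h := ⟨odd_neg_one, hh_deg, hh_leib⟩
  set P := dS ∘ₗ h + h ∘ₗ dS with hP
  have hP_zero : ∀ a ∈ Sym 0, P a = 0 := fun a ha => by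
    rw [hP, LinearMap.add_apply, LinearMap.comp_apply, LinearMap.comp_apply, hh_sym0 a ha,
      hh_sym0 _ (hdS_sym 0 a ha), map_zero, add_zero]
  have hP_gen : ∀ g ∈ Set.range iota ∪ Set.range L, ∀ y, P (g * y) = g * y + g * P y := by
    rintro _ (⟨j, rfl⟩ | ⟨j, rfl⟩) y
    · rw [hd.anticommutator_mul hh (hiota_deg j)]
      simp [hP, hh_iota, hdS_iota, hh_L]
    · rw [hd.anticommutator_mul hh (hL_deg j)]
      simp [hP, hh_L, hdS_iota, hdS_L]
  have hSym_one : ∀ x ∈ Sym 1, x ∈ AddSubmonoid.closure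
      {z | ∃ a ∈ Sym 0, ∃ g ∈ Set.range iota ∪ Set.range L, z = a * g} := by
    intro x hx
    obtain ⟨a, b, hab, rfl⟩ := hgen x hx
    exact sum_mem fun j _ => add_mem
      (AddSubmonoid.subset_closure ⟨a j, (hab j).1, iota j, Or.inl ⟨j, rfl⟩, rfl⟩)
      (AddSubmonoid.subset_closure ⟨b j, (hab j).2, L j, Or.inr ⟨j, rfl⟩, rfl⟩)
  have hhtpy : ∀ m : ℕ, ∀ x ∈ Sym m, P x = (m : k) • x :=
    LinearMap.apply_eq_natCast_smul_of_mem hP_zero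
      (fun a ha => LinearMap.map_mul_eq_mul_of_mem_span
        (fun x hx => hd.anticommutator_mul hh hx.2.choose_spec) (fun x hx => hP_zero x hx.1)
        (hcompat 0 ha))
      hP_gen hSym_one hSym_gen
  refine ⟨hhtpy, fun x hx => ?_, fun ω hω ⟨y, hy⟩ =>
    ⟨_, (decompose Sym y 0).2, eq_apply_decompose_of_mem hdS_sym hω hy⟩⟩
  obtain ⟨y, hy⟩ := exists_eq_decompose_zero_add_of_homotopy hdS_sym hhtpy hx
  exact ⟨_, (decompose Sym x 0).2, y, hy⟩

/-- Let `A = Sym_{Ω•}(Der(Ω•)[1])` with differential `d_S = [d, ·]`,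
where locally `Der(Ω•)` is a free `Ω•`-module on contractions `ι_j` and Lie derivatives
`L_j = [d, ι_j]`.  The `Ω•`-linear derivation `h` with `h(L_j) = ι_j`, `h(ι_j) = 0`
satisfies `d_S ∘ h + h ∘ d_S = m·id` on `Symᵐ`, hence yields a contracting homotopy
showing that the inclusion of scalars `Ω• → A` is a quasi-isomorphism. -/
theorem deRham_BV_contraction {k A : Type*} [Field k] [CharZero k]
    [Ring A] [Algebra k A]
    (grade : ℤ → Submodule k A) (Sym : ℕ → Submodule k A)
    (hSym_internal : DirectSum.IsInternal Sym)
    (hgrade_internal : DirectSum.IsInternal grade)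
    (hone : (1 : A) ∈ Sym 0)
    (hSym_mul : ∀ {m n : ℕ} {x y : A}, x ∈ Sym m → y ∈ Sym n → x * y ∈ Sym (m + n))
    (hgrade_mul : ∀ {i j : ℤ} {x y : A}, x ∈ grade i → y ∈ grade j → x * y ∈ grade (i + j))
    -- each Sym-component is spanned by grade-homogeneous elements
    (hcompat : ∀ m : ℕ, (Sym m : Set A) ⊆
      (Submodule.span k {x : A | x ∈ Sym m ∧ ∃ i : ℤ, x ∈ grade i} : Set A))
    (n : ℕ) (iota L : Fin n → A)
    (hiota_sym : ∀ j, iota j ∈ Sym 1) (hL_sym : ∀ j, L j ∈ Sym 1)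
    (hiota_deg : ∀ j, iota j ∈ grade (-2)) (hL_deg : ∀ j, L j ∈ grade (-1))
    -- Der(Ω•)[1] is freely generated over Ω• = Sym⁰ by the ι_j and L_j
    (hgen : ∀ x ∈ Sym 1, ∃ a b : Fin n → A,
      (∀ j, a j ∈ Sym 0 ∧ b j ∈ Sym 0) ∧ x = ∑ j, (a j * iota j + b j * L j))
    (hSym_gen : ∀ m : ℕ, (Sym (m + 1) : Set A) ⊆
      (Submodule.span k {z : A | ∃ x ∈ Sym 1, ∃ y ∈ Sym m, z = x * y} : Set A))
    (dS h : A →ₗ[k] A)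
    (hdS_deg : ∀ (i : ℤ), ∀ x ∈ grade i, dS x ∈ grade (i + 1))
    (hh_deg : ∀ (i : ℤ), ∀ x ∈ grade i, h x ∈ grade (i - 1))
    (hdS_sym : ∀ (m : ℕ), ∀ x ∈ Sym m, dS x ∈ Sym m)
    (hh_sym : ∀ (m : ℕ), ∀ x ∈ Sym m, h x ∈ Sym m)
    (hdS_leib : ∀ (i : ℤ) (x y : A), x ∈ grade i →
      dS (x * y) = dS x * y + ((-1 : k) ^ i) • (x * dS y))
    (hh_leib : ∀ (i : ℤ) (x y : A), x ∈ grade i →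
      h (x * y) = h x * y + ((-1 : k) ^ i) • (x * h y))
    (hh_L : ∀ j, h (L j) = iota j) (hh_iota : ∀ j, h (iota j) = 0)
    (hh_sym0 : ∀ x ∈ Sym 0, h x = 0)
    (hdS_iota : ∀ j, dS (iota j) = L j) (hdS_L : ∀ j, dS (L j) = 0)
    (hdd : ∀ x : A, dS (dS x) = 0) :
    -- the homotopy identity on Symᵐ
    (∀ m : ℕ, ∀ x ∈ Sym m, dS (h x) + h (dS x) = (m : k) • x) ∧
    -- the inclusion Ω• = Sym⁰ → A is a quasi-isomorphism
    (∀ x : A, dS x = 0 → ∃ ω ∈ Sym 0, ∃ y : A, x = ω + dS y) ∧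
    (∀ ω ∈ Sym 0, (∃ y : A, ω = dS y) → ∃ η ∈ Sym 0, ω = dS η) :=
  deRham_BV_contraction_general grade Sym hSym_internal hcompat n iota L hiota_deg hL_deg hgen
    hSym_gen dS h hdS_deg hh_deg hdS_sym hdS_leib hh_leib hh_L hh_iota hh_sym0 hdS_iota hdS_L
end
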